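/- arXiv:2007.14459 — 2 statements merged into one kernel-verified Lean document; each statement's English description precedes it below -/
import Mathlib

section
/- In a semi-Nelson algebra, the relation x→_N y = 1 (where x→_N y := x→(x∧y)) is transitive: if a→_N b = 1 and b→_N c = 1, then a→_N c = 1. -/
/-- The operations of a semi-Nelson algebra. -/
class SemiNelsonOps (α : Type*) where
  sinf : α → α → α
  ssup : α → α → α
  snimp : α → α → α
  sneg : α → α
  sone : α

open SemiNelsonOps

/-- The weak implication `x →_N y := x → (x ⊓ y)`. -/
def impN {α : Type*} [SemiNelsonOps α] (x y : α) : α := snimp x (sinf x y)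

/-- A semi-Nelson algebra: operations ⟨∧, ∨, →, ∼, 1⟩ satisfying SN1–SN11. -/
class SemiNelsonAlgebra (α : Type*) extends SemiNelsonOps α where
  sn1 : ∀ x y : α, sinf x (ssup x y) = x
  sn2 : ∀ x y z : α, sinf x (ssup y z) = ssup (sinf z x) (sinf y x)
  sn3 : ∀ x : α, sneg (sneg x) = x
  sn4 : ∀ x y : α, sneg (sinf x y) = ssup (sneg x) (sneg y)
  sn5 : ∀ x y : α, sinf x (sneg x) = sinf (sinf x (sneg x)) (ssup y (sneg y))
  sn6 : ∀ x y : α, sinf x (impN x y) = sinf x (ssup (sneg x) y)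
  sn7 : ∀ x y z : α, impN x (impN y z) = impN (sinf x y) z
  sn8 : ∀ x y z : α,
    impN (impN x y) (impN (impN y x) (impN (snimp x z) (snimp y z))) = sone
  sn9 : ∀ x y z : α,
    impN (impN x y) (impN (impN y x) (impN (snimp z x) (snimp z y))) = sone
  sn10 : ∀ x y : α, impN (sneg (snimp x y)) (sinf x (sneg y)) = sone
  sn11 : ∀ x y : α, impN (sinf x (sneg y)) (sneg (snimp x y)) = sone

namespace SNProofAux
variable {α : Type*} [SemiNelsonAlgebra α]

private theorem sn1' : ∀ x y : α, sinf x (ssup x y) = x := SemiNelsonAlgebra.sn1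
private theorem sn2' : ∀ x y z : α, sinf x (ssup y z) = ssup (sinf z x) (sinf y x) := SemiNelsonAlgebra.sn2
private theorem sn3' : ∀ x : α, sneg (sneg x) = x := SemiNelsonAlgebra.sn3
private theorem sn4' : ∀ x y : α, sneg (sinf x y) = ssup (sneg x) (sneg y) := SemiNelsonAlgebra.sn4
private theorem sn5' : ∀ x y : α, sinf x (sneg x) = sinf (sinf x (sneg x)) (ssup y (sneg y)) := SemiNelsonAlgebra.sn5
private theorem sn6' : ∀ x y : α, sinf x (snimp x (sinf x y)) = sinf x (ssup (sneg x) y) := by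
  intro x y; simpa [impN] using SemiNelsonAlgebra.sn6 x y
private theorem sn7' : ∀ x y z : α,
    snimp x (sinf x (snimp y (sinf y z))) = snimp (sinf x y) (sinf (sinf x y) z) := by
  intro x y z; simpa [impN] using SemiNelsonAlgebra.sn7 x y z
private theorem sn8' : ∀ x y z : α,
    snimp (snimp x (sinf x y)) (sinf (snimp x (sinf x y)) (snimp (snimp y (sinf y x)) (sinf (snimp y (sinf y x)) (snimp (snimp x z) (sinf (snimp x z) (snimp y z)))))) = sone := by
  intro x y z; simpa [impN] using SemiNelsonAlgebra.sn8 x y z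
private theorem sn9' : ∀ x y z : α,
    snimp (snimp x (sinf x y)) (sinf (snimp x (sinf x y)) (snimp (snimp y (sinf y x)) (sinf (snimp y (sinf y x)) (snimp (snimp z x) (sinf (snimp z x) (snimp z y)))))) = sone := by
  intro x y z; simpa [impN] using SemiNelsonAlgebra.sn9 x y z
private theorem sn10' : ∀ x y : α,
    snimp (sneg (snimp x y)) (sinf (sneg (snimp x y)) (sinf x (sneg y))) = sone := by
  intro x y; simpa [impN] using SemiNelsonAlgebra.sn10 x y
private theorem sn11' : ∀ x y : α,
    snimp (sinf x (sneg y)) (sinf (sinf x (sneg y)) (sneg (snimp x y))) = sone := by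
  intro x y; simpa [impN] using SemiNelsonAlgebra.sn11 x y


private theorem lat_inf_idem_e2 : ∀ x0 x1 x2 : α, (sinf x0 x1) = (sinf (sinf x0 x1) (sinf x1 (ssup x2 x0))) := by
  intro x0 x1 x2
  calc ((sinf x0 x1) : α)
    _ = (sinf (sinf x0 x1) (ssup (sinf x0 x1) (sinf x2 x1))) := by conv_lhs => rw [← sn1' (sinf x0 x1) (sinf x2 x1)]
    _ = (sinf (sinf x0 x1) (sinf x1 (ssup x2 x0))) := by conv_lhs => enter [2]; rw [← sn2' x1 x2 x0]

private theorem lat_inf_idem_e6 : ∀ x0 x1 : α, (sinf x0 x1) = (sinf (sinf x0 x1) x1) := by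
  intro x0 x1
  calc ((sinf x0 x1) : α)
    _ = (sinf (sinf x0 x1) (sinf x1 (ssup x1 x0))) := by conv_lhs => rw [lat_inf_idem_e2 x0 x1 x1]
    _ = (sinf (sinf x0 x1) x1) := by conv_lhs => enter [2]; rw [sn1' x1 x0]

private theorem lat_inf_idem_e11 : ∀ x0 x1 x2 : α, (sinf x0 (ssup x1 (sinf x2 x0))) = (ssup (sinf x2 x0) (sinf x1 x0)) := by
  intro x0 x1 x2
  calc ((sinf x0 (ssup x1 (sinf x2 x0))) : α)
    _ = (ssup (sinf (sinf x2 x0) x0) (sinf x1 x0)) := by conv_lhs => rw [sn2' x0 x1 (sinf x2 x0)]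
    _ = (ssup (sinf x2 x0) (sinf x1 x0)) := by conv_lhs => enter [1]; rw [← lat_inf_idem_e6 x2 x0]

private theorem lat_inf_idem_e49 : ∀ x0 x1 x2 : α, (sinf x0 (ssup x1 (sinf x2 x0))) = (sinf x0 (ssup x1 x2)) := by
  intro x0 x1 x2
  calc ((sinf x0 (ssup x1 (sinf x2 x0))) : α)
    _ = (ssup (sinf x2 x0) (sinf x1 x0)) := by conv_lhs => rw [lat_inf_idem_e11 x0 x1 x2]
    _ = (sinf x0 (ssup x1 x2)) := by conv_lhs => rw [← sn2' x0 x1 x2]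

private theorem lat_inf_idem_e52 : ∀ x0 x1 x2 : α, (sinf x0 (ssup (sinf x1 x0) x2)) = (sinf x0 (sinf x0 (ssup x2 x1))) := by
  intro x0 x1 x2
  calc ((sinf x0 (ssup (sinf x1 x0) x2)) : α)
    _ = (sinf x0 (ssup (sinf x1 x0) (sinf x2 x0))) := by conv_lhs => rw [← lat_inf_idem_e49 x0 (sinf x1 x0) x2]
    _ = (sinf x0 (sinf x0 (ssup x2 x1))) := by conv_lhs => enter [2]; rw [← sn2' x0 x2 x1]

private theorem lat_inf_idem_e12 : ∀ x0 x1 x2 : α, (sinf x0 (ssup (sinf x1 x0) x2)) = (ssup (sinf x2 x0) (sinf x1 x0)) := by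
  intro x0 x1 x2
  calc ((sinf x0 (ssup (sinf x1 x0) x2)) : α)
    _ = (ssup (sinf x2 x0) (sinf (sinf x1 x0) x0)) := by conv_lhs => rw [sn2' x0 (sinf x1 x0) x2]
    _ = (ssup (sinf x2 x0) (sinf x1 x0)) := by conv_lhs => enter [2]; rw [← lat_inf_idem_e6 x1 x0]

private theorem lat_inf_idem_e62 : ∀ x0 x1 x2 : α, (sinf x0 (ssup (sinf x1 x0) x2)) = (sinf x0 (ssup x1 x2)) := by
  intro x0 x1 x2
  calc ((sinf x0 (ssup (sinf x1 x0) x2)) : α)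
    _ = (ssup (sinf x2 x0) (sinf x1 x0)) := by conv_lhs => rw [lat_inf_idem_e12 x0 x1 x2]
    _ = (sinf x0 (ssup x1 x2)) := by conv_lhs => rw [← sn2' x0 x1 x2]

private theorem lat_inf_idem_e184 : ∀ x0 x1 x2 : α, (sinf x0 (ssup x1 x2)) = (sinf x0 (sinf x0 (ssup x2 x1))) := by
  intro x0 x1 x2
  calc ((sinf x0 (ssup x1 x2)) : α)
    _ = (sinf x0 (ssup (sinf x1 x0) x2)) := by conv_lhs => rw [← lat_inf_idem_e62 x0 x1 x2]
    _ = (sinf x0 (sinf x0 (ssup x2 x1))) := by conv_lhs => rw [lat_inf_idem_e52 x0 x1 x2]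

private theorem lat_inf_idem_e185 : ∀ x0 x1 : α, (sinf x0 (ssup x1 x0)) = (sinf x0 x0) := by
  intro x0 x1
  calc ((sinf x0 (ssup x1 x0)) : α)
    _ = (sinf x0 (sinf x0 (ssup x0 x1))) := by conv_lhs => rw [lat_inf_idem_e184 x0 x1 x0]
    _ = (sinf x0 x0) := by conv_lhs => enter [2]; rw [sn1' x0 x1]

private theorem lat_inf_idem_e200 : ∀ x0 : α, x0 = (sinf x0 x0) := by
  intro x0
  calc (x0 : α)
    _ = (sinf x0 (ssup x0 x0)) := by conv_lhs => rw [← sn1' x0 x0]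
    _ = (sinf x0 x0) := by conv_lhs => rw [lat_inf_idem_e185 x0 x0]

private theorem inf_idem : ∀ x : α, (sinf x x) = x := by
  intro x
  have LL : (sinf x x) = x := by
    calc ((sinf x x) : α)
      _ = x := by conv_lhs => rw [← lat_inf_idem_e200 x]
  have RR : x = x := by
    rfl
  exact LL.trans RR.symm

private theorem lat_sup_idem_e6 : ∀ x0 x1 : α, (sinf x0 (ssup x1 x0)) = (ssup x0 (sinf x1 x0)) := by
  intro x0 x1
  calc ((sinf x0 (ssup x1 x0)) : α)
    _ = (ssup (sinf x0 x0) (sinf x1 x0)) := by conv_lhs => rw [sn2' x0 x1 x0]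
    _ = (ssup x0 (sinf x1 x0)) := by conv_lhs => enter [1]; rw [inf_idem x0]

private theorem lat_sup_idem_e10 : ∀ x0 : α, (sinf x0 (ssup x0 x0)) = (ssup x0 x0) := by
  intro x0
  calc ((sinf x0 (ssup x0 x0)) : α)
    _ = (ssup x0 (sinf x0 x0)) := by conv_lhs => rw [lat_sup_idem_e6 x0 x0]
    _ = (ssup x0 x0) := by conv_lhs => enter [2]; rw [inf_idem x0]

private theorem lat_sup_idem_e16 : ∀ x0 : α, x0 = (ssup x0 x0) := by
  intro x0
  calc (x0 : α)
    _ = (sinf x0 (ssup x0 x0)) := by conv_lhs => rw [← sn1' x0 x0]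
    _ = (ssup x0 x0) := by conv_lhs => rw [lat_sup_idem_e10 x0]

private theorem sup_idem : ∀ x : α, (ssup x x) = x := by
  intro x
  have LL : (ssup x x) = x := by
    calc ((ssup x x) : α)
      _ = x := by conv_lhs => rw [← lat_sup_idem_e16 x]
  have RR : x = x := by
    rfl
  exact LL.trans RR.symm

private theorem lat_inf_comm_e9 : ∀ x0 x1 : α, (sinf x0 (ssup x1 x1)) = (sinf x1 x0) := by
  intro x0 x1
  calc ((sinf x0 (ssup x1 x1)) : α)
    _ = (ssup (sinf x1 x0) (sinf x1 x0)) := by conv_lhs => rw [sn2' x0 x1 x1]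
    _ = (sinf x1 x0) := by conv_lhs => rw [sup_idem (sinf x1 x0)]

private theorem lat_inf_comm_e10 : ∀ x0 x1 : α, (sinf x0 x1) = (sinf x1 x0) := by
  intro x0 x1
  calc ((sinf x0 x1) : α)
    _ = (sinf x0 (ssup x1 x1)) := by conv_lhs => enter [2]; rw [← sup_idem x1]
    _ = (sinf x1 x0) := by conv_lhs => rw [lat_inf_comm_e9 x0 x1]

private theorem inf_comm : ∀ x y : α, (sinf x y) = (sinf y x) := by
  intro x y
  have LL : (sinf x y) = (sinf x y) := by
    rfl
  have RR : (sinf y x) = (sinf x y) := by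
    calc ((sinf y x) : α)
      _ = (sinf x y) := by conv_lhs => rw [lat_inf_comm_e10 y x]
  exact LL.trans RR.symm

private theorem lat_sup_comm_e6 : ∀ x0 x1 x2 : α, (sinf (ssup x0 x1) (ssup x2 x0)) = (ssup x0 (sinf x2 (ssup x0 x1))) := by
  intro x0 x1 x2
  calc ((sinf (ssup x0 x1) (ssup x2 x0)) : α)
    _ = (ssup (sinf x0 (ssup x0 x1)) (sinf x2 (ssup x0 x1))) := by conv_lhs => rw [sn2' (ssup x0 x1) x2 x0]
    _ = (ssup x0 (sinf x2 (ssup x0 x1))) := by conv_lhs => enter [1]; rw [sn1' x0 x1]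

private theorem lat_sup_comm_e8 : ∀ x0 x1 : α, (sinf x0 (ssup x1 x0)) = (ssup x0 (sinf x1 x0)) := by
  intro x0 x1
  calc ((sinf x0 (ssup x1 x0)) : α)
    _ = (ssup (sinf x0 x0) (sinf x1 x0)) := by conv_lhs => rw [sn2' x0 x1 x0]
    _ = (ssup x0 (sinf x1 x0)) := by conv_lhs => enter [1]; rw [inf_idem x0]

private theorem lat_sup_comm_e13 : ∀ x0 x1 : α, x0 = (sinf x0 (sinf x0 (ssup x1 x0))) := by
  intro x0 x1
  calc (x0 : α)
    _ = (sinf x0 (ssup x0 (sinf x1 x0))) := by conv_lhs => rw [← sn1' x0 (sinf x1 x0)]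
    _ = (sinf x0 (sinf x0 (ssup x1 x0))) := by conv_lhs => enter [2]; rw [← lat_sup_comm_e8 x0 x1]

private theorem lat_sup_comm_e9 : ∀ x0 x1 : α, (sinf x0 (ssup x0 x1)) = (ssup (sinf x1 x0) x0) := by
  intro x0 x1
  calc ((sinf x0 (ssup x0 x1)) : α)
    _ = (ssup (sinf x1 x0) (sinf x0 x0)) := by conv_lhs => rw [sn2' x0 x0 x1]
    _ = (ssup (sinf x1 x0) x0) := by conv_lhs => enter [2]; rw [inf_idem x0]

private theorem lat_sup_comm_e23 : ∀ x0 x1 : α, x0 = (ssup (sinf x1 x0) x0) := by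
  intro x0 x1
  calc (x0 : α)
    _ = (sinf x0 (ssup x0 x1)) := by conv_lhs => rw [← sn1' x0 x1]
    _ = (ssup (sinf x1 x0) x0) := by conv_lhs => rw [lat_sup_comm_e9 x0 x1]

private theorem lat_sup_comm_e26 : ∀ x0 x1 : α, x0 = (ssup (sinf x0 x1) x0) := by
  intro x0 x1
  calc (x0 : α)
    _ = (ssup (sinf x1 x0) x0) := by conv_lhs => rw [lat_sup_comm_e23 x0 x1]
    _ = (ssup (sinf x0 x1) x0) := by conv_lhs => enter [1]; rw [inf_comm x1 x0]

private theorem lat_sup_comm_e28 : ∀ x0 x1 : α, (sinf x0 x1) = (sinf (sinf x0 x1) x0) := by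
  intro x0 x1
  calc ((sinf x0 x1) : α)
    _ = (sinf (sinf x0 x1) (ssup (sinf x0 x1) x0)) := by conv_lhs => rw [← sn1' (sinf x0 x1) x0]
    _ = (sinf (sinf x0 x1) x0) := by conv_lhs => enter [2]; rw [← lat_sup_comm_e26 x0 x1]

private theorem lat_sup_comm_e42 : ∀ x0 x1 : α, (sinf x0 x1) = (sinf x0 (sinf x0 x1)) := by
  intro x0 x1
  calc ((sinf x0 x1) : α)
    _ = (sinf (sinf x0 x1) x0) := by conv_lhs => rw [lat_sup_comm_e28 x0 x1]
    _ = (sinf x0 (sinf x0 x1)) := by conv_lhs => rw [inf_comm (sinf x0 x1) x0]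

private theorem lat_sup_comm_e48 : ∀ x0 x1 : α, x0 = (sinf x0 (ssup x1 x0)) := by
  intro x0 x1
  calc (x0 : α)
    _ = (sinf x0 (sinf x0 (ssup x1 x0))) := by conv_lhs => rw [lat_sup_comm_e13 x0 x1]
    _ = (sinf x0 (ssup x1 x0)) := by conv_lhs => rw [← lat_sup_comm_e42 x0 (ssup x1 x0)]

private theorem lat_sup_comm_e13425 : ∀ x0 x1 : α, (sinf (ssup x0 x1) (ssup x1 x0)) = (ssup x0 x1) := by
  intro x0 x1
  calc ((sinf (ssup x0 x1) (ssup x1 x0)) : α)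
    _ = (ssup x0 (sinf x1 (ssup x0 x1))) := by conv_lhs => rw [lat_sup_comm_e6 x0 x1 x1]
    _ = (ssup x0 x1) := by conv_lhs => enter [2]; rw [← lat_sup_comm_e48 x1 x0]

private theorem lat_sup_comm_e13978 : ∀ x0 x1 : α, (sinf (ssup x0 x1) (ssup x1 x0)) = (ssup x1 x0) := by
  intro x0 x1
  calc ((sinf (ssup x0 x1) (ssup x1 x0)) : α)
    _ = (sinf (ssup x1 x0) (ssup x0 x1)) := by conv_lhs => rw [← inf_comm (ssup x1 x0) (ssup x0 x1)]
    _ = (ssup x1 x0) := by conv_lhs => rw [lat_sup_comm_e13425 x1 x0]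

private theorem lat_sup_comm_e14820 : ∀ x0 x1 : α, (ssup x0 x1) = (ssup x1 x0) := by
  intro x0 x1
  calc ((ssup x0 x1) : α)
    _ = (sinf (ssup x0 x1) (ssup x1 x0)) := by conv_lhs => rw [← lat_sup_comm_e13425 x0 x1]
    _ = (ssup x1 x0) := by conv_lhs => rw [lat_sup_comm_e13978 x0 x1]

private theorem sup_comm : ∀ x y : α, (ssup x y) = (ssup y x) := by
  intro x y
  have LL : (ssup x y) = (ssup x y) := by
    rfl
  have RR : (ssup y x) = (ssup x y) := by
    calc ((ssup y x) : α)
      _ = (ssup x y) := by conv_lhs => rw [lat_sup_comm_e14820 y x]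
  exact LL.trans RR.symm

private theorem lat_absorb2_e9 : ∀ x0 x1 : α, (sinf x0 (ssup x1 x0)) = (ssup x0 (sinf x1 x0)) := by
  intro x0 x1
  calc ((sinf x0 (ssup x1 x0)) : α)
    _ = (ssup (sinf x0 x0) (sinf x1 x0)) := by conv_lhs => rw [sn2' x0 x1 x0]
    _ = (ssup x0 (sinf x1 x0)) := by conv_lhs => enter [1]; rw [inf_idem x0]

private theorem lat_absorb2_e14 : ∀ x0 x1 : α, x0 = (sinf x0 (ssup x1 x0)) := by
  intro x0 x1
  calc (x0 : α)
    _ = (sinf x0 (ssup x0 x1)) := by conv_lhs => rw [← sn1' x0 x1]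
    _ = (sinf x0 (ssup x1 x0)) := by conv_lhs => enter [2]; rw [sup_comm x0 x1]

private theorem lat_absorb2_e19 : ∀ x0 x1 : α, x0 = (ssup x0 (sinf x1 x0)) := by
  intro x0 x1
  calc (x0 : α)
    _ = (sinf x0 (ssup x1 x0)) := by conv_lhs => rw [lat_absorb2_e14 x0 x1]
    _ = (ssup x0 (sinf x1 x0)) := by conv_lhs => rw [lat_absorb2_e9 x0 x1]

private theorem lat_absorb2_e21 : ∀ x0 x1 : α, x0 = (ssup x0 (sinf x0 x1)) := by
  intro x0 x1
  calc (x0 : α)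
    _ = (ssup x0 (sinf x1 x0)) := by conv_lhs => rw [lat_absorb2_e19 x0 x1]
    _ = (ssup x0 (sinf x0 x1)) := by conv_lhs => enter [2]; rw [inf_comm x1 x0]

private theorem absorb2 : ∀ x y : α, (ssup x (sinf x y)) = x := by
  intro x y
  have LL : (ssup x (sinf x y)) = x := by
    calc ((ssup x (sinf x y)) : α)
      _ = x := by conv_lhs => rw [← lat_absorb2_e21 x y]
  have RR : x = x := by
    rfl
  exact LL.trans RR.symm

private theorem lat_inf_assoc_e13 : ∀ x0 x1 x2 : α, (sinf x0 (ssup x1 x2)) = (ssup (sinf x0 x2) (sinf x1 x0)) := by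
  intro x0 x1 x2
  calc ((sinf x0 (ssup x1 x2)) : α)
    _ = (ssup (sinf x2 x0) (sinf x1 x0)) := by conv_lhs => rw [sn2' x0 x1 x2]
    _ = (ssup (sinf x0 x2) (sinf x1 x0)) := by conv_lhs => enter [1]; rw [inf_comm x2 x0]

private theorem lat_inf_assoc_e117 : ∀ x0 x1 x2 : α, (sinf x0 (ssup x1 (ssup x0 x2))) = (ssup x0 (sinf x1 x0)) := by
  intro x0 x1 x2
  calc ((sinf x0 (ssup x1 (ssup x0 x2))) : α)
    _ = (ssup (sinf x0 (ssup x0 x2)) (sinf x1 x0)) := by conv_lhs => rw [lat_inf_assoc_e13 x0 x1 (ssup x0 x2)]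
    _ = (ssup x0 (sinf x1 x0)) := by conv_lhs => enter [1]; rw [sn1' x0 x2]

private theorem lat_inf_assoc_e18 : ∀ x0 x1 : α, x0 = (ssup x0 (sinf x1 x0)) := by
  intro x0 x1
  calc (x0 : α)
    _ = (ssup x0 (sinf x0 x1)) := by conv_lhs => rw [← absorb2 x0 x1]
    _ = (ssup x0 (sinf x1 x0)) := by conv_lhs => enter [2]; rw [inf_comm x0 x1]

private theorem lat_inf_assoc_e474 : ∀ x0 x1 x2 : α, (sinf x0 (ssup x1 (ssup x0 x2))) = x0 := by
  intro x0 x1 x2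
  calc ((sinf x0 (ssup x1 (ssup x0 x2))) : α)
    _ = (ssup x0 (sinf x1 x0)) := by conv_lhs => rw [lat_inf_assoc_e117 x0 x1 x2]
    _ = x0 := by conv_lhs => rw [← lat_inf_assoc_e18 x0 x1]

private theorem lat_inf_assoc_e479 : ∀ x0 x1 x2 : α, x0 = (sinf x0 (ssup x1 (ssup x2 x0))) := by
  intro x0 x1 x2
  calc (x0 : α)
    _ = (sinf x0 (ssup x1 (ssup x0 x2))) := by conv_lhs => rw [← lat_inf_assoc_e474 x0 x1 x2]
    _ = (sinf x0 (ssup x1 (ssup x2 x0))) := by conv_lhs => enter [2, 2]; rw [sup_comm x0 x2]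

private theorem lat_inf_assoc_e528 : ∀ x0 x1 x2 : α, (sinf x0 x1) = (sinf (sinf x0 x1) (ssup x2 x0)) := by
  intro x0 x1 x2
  calc ((sinf x0 x1) : α)
    _ = (sinf (sinf x0 x1) (ssup x2 (ssup x0 (sinf x0 x1)))) := by conv_lhs => rw [lat_inf_assoc_e479 (sinf x0 x1) x2 x0]
    _ = (sinf (sinf x0 x1) (ssup x2 x0)) := by conv_lhs => enter [2, 2]; rw [absorb2 x0 x1]

private theorem lat_inf_assoc_e580 : ∀ x0 x1 x2 : α, (sinf (ssup x0 x1) (sinf x1 x2)) = (sinf x1 x2) := by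
  intro x0 x1 x2
  calc ((sinf (ssup x0 x1) (sinf x1 x2)) : α)
    _ = (sinf (sinf x1 x2) (ssup x0 x1)) := by conv_lhs => rw [← inf_comm (sinf x1 x2) (ssup x0 x1)]
    _ = (sinf x1 x2) := by conv_lhs => rw [← lat_inf_assoc_e528 x1 x2 x0]

private theorem lat_inf_assoc_e776 : ∀ x0 x1 x2 : α, (sinf (sinf x0 x1) x2) = (sinf x0 (sinf (sinf x0 x1) x2)) := by
  intro x0 x1 x2
  calc ((sinf (sinf x0 x1) x2) : α)
    _ = (sinf (ssup x0 (sinf x0 x1)) (sinf (sinf x0 x1) x2)) := by conv_lhs => rw [← lat_inf_assoc_e580 x0 (sinf x0 x1) x2]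
    _ = (sinf x0 (sinf (sinf x0 x1) x2)) := by conv_lhs => enter [1]; rw [absorb2 x0 x1]

private theorem lat_inf_assoc_e2164 : ∀ x0 x1 x2 : α, (sinf (sinf x0 x1) x2) = (sinf x0 (sinf x2 (sinf x0 x1))) := by
  intro x0 x1 x2
  calc ((sinf (sinf x0 x1) x2) : α)
    _ = (sinf x0 (sinf (sinf x0 x1) x2)) := by conv_lhs => rw [lat_inf_assoc_e776 x0 x1 x2]
    _ = (sinf x0 (sinf x2 (sinf x0 x1))) := by conv_lhs => enter [2]; rw [inf_comm (sinf x0 x1) x2]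

private theorem lat_inf_assoc_e530 : ∀ x0 x1 x2 : α, (sinf x0 x1) = (sinf (sinf x0 x1) (ssup x2 x1)) := by
  intro x0 x1 x2
  calc ((sinf x0 x1) : α)
    _ = (sinf (sinf x0 x1) (ssup x2 (ssup x1 (sinf x0 x1)))) := by conv_lhs => rw [lat_inf_assoc_e479 (sinf x0 x1) x2 x1]
    _ = (sinf (sinf x0 x1) (ssup x2 x1)) := by conv_lhs => enter [2, 2]; rw [← lat_inf_assoc_e18 x1 x0]

private theorem lat_inf_assoc_e631 : ∀ x0 x1 x2 : α, (sinf (ssup x0 x1) (sinf x2 x1)) = (sinf x2 x1) := by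
  intro x0 x1 x2
  calc ((sinf (ssup x0 x1) (sinf x2 x1)) : α)
    _ = (sinf (sinf x2 x1) (ssup x0 x1)) := by conv_lhs => rw [← inf_comm (sinf x2 x1) (ssup x0 x1)]
    _ = (sinf x2 x1) := by conv_lhs => rw [← lat_inf_assoc_e530 x2 x1 x0]

private theorem lat_inf_assoc_e908 : ∀ x0 x1 x2 : α, (sinf x0 (sinf x1 x2)) = (sinf x1 (sinf x0 (sinf x1 x2))) := by
  intro x0 x1 x2
  calc ((sinf x0 (sinf x1 x2)) : α)
    _ = (sinf (ssup x1 (sinf x1 x2)) (sinf x0 (sinf x1 x2))) := by conv_lhs => rw [← lat_inf_assoc_e631 x1 (sinf x1 x2) x0]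
    _ = (sinf x1 (sinf x0 (sinf x1 x2))) := by conv_lhs => enter [1]; rw [absorb2 x1 x2]

private theorem lat_inf_assoc_e5044 : ∀ x0 x1 x2 : α, (sinf (sinf x0 x1) x2) = (sinf x2 (sinf x0 x1)) := by
  intro x0 x1 x2
  calc ((sinf (sinf x0 x1) x2) : α)
    _ = (sinf x0 (sinf x2 (sinf x0 x1))) := by conv_lhs => rw [lat_inf_assoc_e2164 x0 x1 x2]
    _ = (sinf x2 (sinf x0 x1)) := by conv_lhs => rw [← lat_inf_assoc_e908 x2 x0 x1]

private theorem lat_inf_assoc_e5053 : ∀ x0 x1 x2 : α, (sinf x0 (sinf x1 x2)) = (sinf (sinf x2 x1) x0) := by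
  intro x0 x1 x2
  calc ((sinf x0 (sinf x1 x2)) : α)
    _ = (sinf (sinf x1 x2) x0) := by conv_lhs => rw [← lat_inf_assoc_e5044 x1 x2 x0]
    _ = (sinf (sinf x2 x1) x0) := by conv_lhs => enter [1]; rw [inf_comm x1 x2]

private theorem lat_inf_assoc_e15 : ∀ x0 x1 : α, x0 = (sinf x0 (ssup x1 x0)) := by
  intro x0 x1
  calc (x0 : α)
    _ = (sinf x0 (ssup x0 x1)) := by conv_lhs => rw [← sn1' x0 x1]
    _ = (sinf x0 (ssup x1 x0)) := by conv_lhs => enter [2]; rw [sup_comm x0 x1]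

private theorem lat_inf_assoc_e22 : ∀ x0 x1 : α, (sinf x0 x1) = (sinf (sinf x0 x1) x0) := by
  intro x0 x1
  calc ((sinf x0 x1) : α)
    _ = (sinf (sinf x0 x1) (ssup x0 (sinf x0 x1))) := by conv_lhs => rw [lat_inf_assoc_e15 (sinf x0 x1) x0]
    _ = (sinf (sinf x0 x1) x0) := by conv_lhs => enter [2]; rw [absorb2 x0 x1]

private theorem lat_inf_assoc_e26 : ∀ x0 x1 : α, (sinf x0 x1) = (sinf x0 (sinf x0 x1)) := by
  intro x0 x1
  calc ((sinf x0 x1) : α)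
    _ = (sinf (sinf x0 x1) x0) := by conv_lhs => rw [lat_inf_assoc_e22 x0 x1]
    _ = (sinf x0 (sinf x0 x1)) := by conv_lhs => rw [inf_comm (sinf x0 x1) x0]

private theorem lat_inf_assoc_e125 : ∀ x0 x1 x2 : α, (sinf x0 (ssup x1 (sinf x0 x2))) = (ssup (sinf x0 x2) (sinf x1 x0)) := by
  intro x0 x1 x2
  calc ((sinf x0 (ssup x1 (sinf x0 x2))) : α)
    _ = (ssup (sinf x0 (sinf x0 x2)) (sinf x1 x0)) := by conv_lhs => rw [lat_inf_assoc_e13 x0 x1 (sinf x0 x2)]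
    _ = (ssup (sinf x0 x2) (sinf x1 x0)) := by conv_lhs => enter [1]; rw [← lat_inf_assoc_e26 x0 x2]

private theorem lat_inf_assoc_e23133 : ∀ x0 x1 x2 : α, (sinf x0 (ssup x1 (sinf x0 x2))) = (sinf x0 (ssup x1 x2)) := by
  intro x0 x1 x2
  calc ((sinf x0 (ssup x1 (sinf x0 x2))) : α)
    _ = (ssup (sinf x0 x2) (sinf x1 x0)) := by conv_lhs => rw [lat_inf_assoc_e125 x0 x1 x2]
    _ = (sinf x0 (ssup x1 x2)) := by conv_lhs => rw [← lat_inf_assoc_e13 x0 x1 x2]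

private theorem lat_inf_assoc_e23137 : ∀ x0 x1 x2 : α, (sinf x0 (ssup (sinf x1 x2) x2)) = (sinf x0 (sinf x2 (ssup x0 x1))) := by
  intro x0 x1 x2
  calc ((sinf x0 (ssup (sinf x1 x2) x2)) : α)
    _ = (sinf x0 (ssup (sinf x1 x2) (sinf x0 x2))) := by conv_lhs => rw [← lat_inf_assoc_e23133 x0 (sinf x1 x2) x2]
    _ = (sinf x0 (sinf x2 (ssup x0 x1))) := by conv_lhs => enter [2]; rw [← sn2' x2 x0 x1]

private theorem lat_inf_assoc_e16 : ∀ x0 x1 x2 : α, (sinf x0 (ssup x1 x2)) = (ssup (sinf x1 x0) (sinf x2 x0)) := by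
  intro x0 x1 x2
  calc ((sinf x0 (ssup x1 x2)) : α)
    _ = (ssup (sinf x2 x0) (sinf x1 x0)) := by conv_lhs => rw [sn2' x0 x1 x2]
    _ = (ssup (sinf x1 x0) (sinf x2 x0)) := by conv_lhs => rw [sup_comm (sinf x2 x0) (sinf x1 x0)]

private theorem lat_inf_assoc_e155 : ∀ x0 x1 x2 : α, (sinf x0 (ssup x1 x2)) = (sinf x0 (ssup x2 x1)) := by
  intro x0 x1 x2
  calc ((sinf x0 (ssup x1 x2)) : α)
    _ = (ssup (sinf x1 x0) (sinf x2 x0)) := by conv_lhs => rw [lat_inf_assoc_e16 x0 x1 x2]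
    _ = (sinf x0 (ssup x2 x1)) := by conv_lhs => rw [← sn2' x0 x2 x1]

private theorem lat_inf_assoc_e297590 : ∀ x0 x1 x2 : α, (sinf x0 x1) = (sinf x0 (sinf x1 (ssup x0 x2))) := by
  intro x0 x1 x2
  calc ((sinf x0 x1) : α)
    _ = (sinf x0 (ssup x1 (sinf x2 x1))) := by conv_lhs => enter [2]; rw [lat_inf_assoc_e18 x1 x2]
    _ = (sinf x0 (ssup (sinf x2 x1) x1)) := by conv_lhs => rw [← lat_inf_assoc_e155 x0 (sinf x2 x1) x1]
    _ = (sinf x0 (sinf x1 (ssup x0 x2))) := by conv_lhs => rw [lat_inf_assoc_e23137 x0 x2 x1]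

private theorem lat_inf_assoc_e297595 : ∀ x0 x1 x2 : α, (sinf x0 x1) = (sinf x0 (sinf x1 (ssup x2 x0))) := by
  intro x0 x1 x2
  calc ((sinf x0 x1) : α)
    _ = (sinf x0 (sinf x1 (ssup x0 x2))) := by conv_lhs => rw [lat_inf_assoc_e297590 x0 x1 x2]
    _ = (sinf x0 (sinf x1 (ssup x2 x0))) := by conv_lhs => enter [2, 2]; rw [sup_comm x0 x2]

private theorem lat_inf_assoc_e298769 : ∀ x0 x1 x2 : α, (sinf (sinf x0 x1) x2) = (sinf (sinf x0 x1) (sinf x2 x0)) := by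
  intro x0 x1 x2
  calc ((sinf (sinf x0 x1) x2) : α)
    _ = (sinf (sinf x0 x1) (sinf x2 (ssup x0 (sinf x0 x1)))) := by conv_lhs => rw [lat_inf_assoc_e297595 (sinf x0 x1) x2 x0]
    _ = (sinf (sinf x0 x1) (sinf x2 x0)) := by conv_lhs => enter [2, 2]; rw [absorb2 x0 x1]

private theorem lat_inf_assoc_e304575 : ∀ x0 x1 x2 : α, (sinf (sinf x0 x1) (sinf x1 x2)) = (sinf (sinf x1 x2) x0) := by
  intro x0 x1 x2
  calc ((sinf (sinf x0 x1) (sinf x1 x2)) : α)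
    _ = (sinf (sinf x1 x2) (sinf x0 x1)) := by conv_lhs => rw [← inf_comm (sinf x1 x2) (sinf x0 x1)]
    _ = (sinf (sinf x1 x2) x0) := by conv_lhs => rw [← lat_inf_assoc_e298769 x1 x2 x0]

private theorem lat_inf_assoc_e160 : ∀ x0 x1 x2 : α, (sinf (ssup x0 x1) x2) = (sinf x2 (ssup x1 x0)) := by
  intro x0 x1 x2
  calc ((sinf (ssup x0 x1) x2) : α)
    _ = (sinf x2 (ssup x0 x1)) := by conv_lhs => rw [← inf_comm x2 (ssup x0 x1)]
    _ = (sinf x2 (ssup x1 x0)) := by conv_lhs => rw [lat_inf_assoc_e155 x2 x0 x1]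

private theorem lat_inf_assoc_e297609 : ∀ x0 x1 x2 : α, (sinf x0 x1) = (sinf x0 (sinf (ssup x2 x0) x1)) := by
  intro x0 x1 x2
  calc ((sinf x0 x1) : α)
    _ = (sinf x0 (sinf x1 (ssup x0 x2))) := by conv_lhs => rw [lat_inf_assoc_e297590 x0 x1 x2]
    _ = (sinf x0 (sinf (ssup x2 x0) x1)) := by conv_lhs => enter [2]; rw [← lat_inf_assoc_e160 x2 x0 x1]

private theorem lat_inf_assoc_e299261 : ∀ x0 x1 x2 : α, (sinf (sinf x0 x1) x2) = (sinf (sinf x0 x1) (sinf x1 x2)) := by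
  intro x0 x1 x2
  calc ((sinf (sinf x0 x1) x2) : α)
    _ = (sinf (sinf x0 x1) (sinf (ssup x1 (sinf x0 x1)) x2)) := by conv_lhs => rw [lat_inf_assoc_e297609 (sinf x0 x1) x2 x1]
    _ = (sinf (sinf x0 x1) (sinf x1 x2)) := by conv_lhs => enter [2, 1]; rw [← lat_inf_assoc_e18 x1 x0]

private theorem lat_inf_assoc_e308880 : ∀ x0 x1 x2 : α, (sinf (sinf x0 x1) x2) = (sinf (sinf x1 x2) x0) := by
  intro x0 x1 x2
  calc ((sinf (sinf x0 x1) x2) : α)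
    _ = (sinf (sinf x0 x1) (sinf x1 x2)) := by conv_lhs => rw [lat_inf_assoc_e299261 x0 x1 x2]
    _ = (sinf (sinf x1 x2) x0) := by conv_lhs => rw [lat_inf_assoc_e304575 x0 x1 x2]

private theorem lat_inf_assoc_e309097 : ∀ x0 x1 x2 : α, (sinf x0 (sinf x1 x2)) = (sinf (sinf x0 x2) x1) := by
  intro x0 x1 x2
  calc ((sinf x0 (sinf x1 x2)) : α)
    _ = (sinf (sinf x2 x1) x0) := by conv_lhs => rw [lat_inf_assoc_e5053 x0 x1 x2]
    _ = (sinf (sinf x0 x2) x1) := by conv_lhs => rw [← lat_inf_assoc_e308880 x0 x2 x1]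

private theorem lat_inf_assoc_e308887 : ∀ x0 x1 x2 : α, (sinf x0 (sinf x1 x2)) = (sinf (sinf x2 x0) x1) := by
  intro x0 x1 x2
  calc ((sinf x0 (sinf x1 x2)) : α)
    _ = (sinf (sinf x1 x2) x0) := by conv_lhs => rw [← inf_comm (sinf x1 x2) x0]
    _ = (sinf (sinf x2 x0) x1) := by conv_lhs => rw [lat_inf_assoc_e308880 x1 x2 x0]

private theorem lat_inf_assoc_e311920 : ∀ x0 x1 x2 : α, (sinf x0 (sinf x1 x2)) = (sinf x2 (sinf x1 x0)) := by
  intro x0 x1 x2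
  calc ((sinf x0 (sinf x1 x2)) : α)
    _ = (sinf (sinf x0 x2) x1) := by conv_lhs => rw [lat_inf_assoc_e309097 x0 x1 x2]
    _ = (sinf x2 (sinf x1 x0)) := by conv_lhs => rw [← lat_inf_assoc_e308887 x2 x1 x0]

private theorem lat_inf_assoc_e310700 : ∀ x0 x1 x2 : α, (sinf x0 (sinf x1 x2)) = (sinf x2 (sinf x0 x1)) := by
  intro x0 x1 x2
  calc ((sinf x0 (sinf x1 x2)) : α)
    _ = (sinf (sinf x1 x2) x0) := by conv_lhs => rw [← inf_comm (sinf x1 x2) x0]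
    _ = (sinf x2 (sinf x0 x1)) := by conv_lhs => rw [← lat_inf_assoc_e308887 x2 x0 x1]

private theorem lat_inf_assoc_e5306 : ∀ x0 x1 x2 : α, (sinf x0 (sinf x1 x2)) = (sinf x0 (sinf x2 x1)) := by
  intro x0 x1 x2
  calc ((sinf x0 (sinf x1 x2)) : α)
    _ = (sinf (sinf x1 x2) x0) := by conv_lhs => rw [← inf_comm (sinf x1 x2) x0]
    _ = (sinf x0 (sinf x2 x1)) := by conv_lhs => rw [← lat_inf_assoc_e5053 x0 x2 x1]

private theorem inf_assoc : ∀ x y z : α, (sinf (sinf x y) z) = (sinf x (sinf y z)) := by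
  intro x y z
  have LL : (sinf (sinf x y) z) = (sinf x (sinf y z)) := by
    calc ((sinf (sinf x y) z) : α)
      _ = (sinf z (sinf x y)) := by conv_lhs => rw [inf_comm (sinf x y) z]
      _ = (sinf y (sinf x z)) := by conv_lhs => rw [lat_inf_assoc_e311920 z x y]
      _ = (sinf x (sinf z y)) := by conv_lhs => rw [← lat_inf_assoc_e310700 x z y]
      _ = (sinf x (sinf y z)) := by conv_lhs => rw [lat_inf_assoc_e5306 x z y]
  have RR : (sinf x (sinf y z)) = (sinf x (sinf y z)) := by
    rfl
  exact LL.trans RR.symm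

private theorem lat_demorgan2_e35 : ∀ x0 x1 : α, (sneg (sinf (sneg x0) x1)) = (ssup x0 (sneg x1)) := by
  intro x0 x1
  calc ((sneg (sinf (sneg x0) x1)) : α)
    _ = (ssup (sneg (sneg x0)) (sneg x1)) := by conv_lhs => rw [sn4' (sneg x0) x1]
    _ = (ssup x0 (sneg x1)) := by conv_lhs => enter [1]; rw [sn3' x0]

private theorem lat_demorgan2_e120 : ∀ x0 x1 : α, (sinf (sneg x0) x1) = (sneg (ssup x0 (sneg x1))) := by
  intro x0 x1
  calc ((sinf (sneg x0) x1) : α)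
    _ = (sneg (sneg (sinf (sneg x0) x1))) := by conv_lhs => rw [← sn3' (sinf (sneg x0) x1)]
    _ = (sneg (ssup x0 (sneg x1))) := by conv_lhs => enter [1]; rw [lat_demorgan2_e35 x0 x1]

private theorem lat_demorgan2_e182 : ∀ x0 x1 : α, (sinf (sneg x0) (sneg x1)) = (sneg (ssup x0 x1)) := by
  intro x0 x1
  calc ((sinf (sneg x0) (sneg x1)) : α)
    _ = (sneg (ssup x0 (sneg (sneg x1)))) := by conv_lhs => rw [lat_demorgan2_e120 x0 (sneg x1)]
    _ = (sneg (ssup x0 x1)) := by conv_lhs => enter [1, 2]; rw [sn3' x1]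

private theorem demorgan2 : ∀ x y : α, (sneg (ssup x y)) = (sinf (sneg x) (sneg y)) := by
  intro x y
  have LL : (sneg (ssup x y)) = (sneg (ssup x y)) := by
    rfl
  have RR : (sinf (sneg x) (sneg y)) = (sneg (ssup x y)) := by
    calc ((sinf (sneg x) (sneg y)) : α)
      _ = (sneg (ssup x y)) := by conv_lhs => rw [lat_demorgan2_e182 x y]
  exact LL.trans RR.symm

private theorem rr : ∀ x : α, snimp (snimp x x) (snimp x x) = sone := by
  intro x
  have h := sn8' x x x
  rw [inf_idem x] at h
  rw [inf_idem (snimp x x)] at h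
  rw [sn7' (snimp x x) (snimp x x) (snimp (snimp x x) (snimp x x))] at h
  rw [inf_idem (snimp x x)] at h
  have h2 : sinf (snimp x x) (snimp (snimp x x) (snimp x x)) = snimp x x := by
    conv_lhs => enter [2, 2]; rw [← inf_idem (snimp x x)]
    rw [sn6' (snimp x x) (snimp x x)]
    rw [sup_comm (sneg (snimp x x)) (snimp x x)]
    rw [sn1' (snimp x x) (sneg (snimp x x))]
  rw [h2] at h
  exact h

private theorem top_rr : ∀ x : α, sinf (snimp x x) sone = snimp x x := by
  intro x
  rw [← rr x]
  conv_lhs => enter [2, 2]; rw [← inf_idem (snimp x x)]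
  rw [sn6' (snimp x x) (snimp x x)]
  rw [sup_comm (sneg (snimp x x)) (snimp x x)]
  rw [sn1' (snimp x x) (sneg (snimp x x))]

private theorem rf_e50 : ∀ x0 x1 : α, (snimp x0 (sinf x0 (snimp (sneg x1) (sinf (sneg x1) (sneg (snimp x0 x1)))))) = sone := by
  intro x0 x1
  calc ((snimp x0 (sinf x0 (snimp (sneg x1) (sinf (sneg x1) (sneg (snimp x0 x1)))))) : α)
    _ = (snimp (sinf x0 (sneg x1)) (sinf (sinf x0 (sneg x1)) (sneg (snimp x0 x1)))) := by conv_lhs => rw [sn7' x0 (sneg x1) (sneg (snimp x0 x1))]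
    _ = sone := by conv_lhs => rw [sn11' x0 x1]

private theorem rf_e100 : ∀ x0 x1 : α, (sneg (ssup x0 (sneg x1))) = (sinf (sneg x0) x1) := by
  intro x0 x1
  calc ((sneg (ssup x0 (sneg x1))) : α)
    _ = (sinf (sneg x0) (sneg (sneg x1))) := by conv_lhs => rw [demorgan2 x0 (sneg x1)]
    _ = (sinf (sneg x0) x1) := by conv_lhs => enter [2]; rw [sn3' x1]

private theorem rf_e99 : ∀ x0 x1 : α, (sneg (ssup (sneg x0) x1)) = (sinf x0 (sneg x1)) := by
  intro x0 x1
  calc ((sneg (ssup (sneg x0) x1)) : α)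
    _ = (sinf (sneg (sneg x0)) (sneg x1)) := by conv_lhs => rw [demorgan2 (sneg x0) x1]
    _ = (sinf x0 (sneg x1)) := by conv_lhs => enter [1]; rw [sn3' x0]

private theorem rf_e184 : ∀ x0 x1 : α, (sinf x0 (sneg x1)) = (sneg (ssup x1 (sneg x0))) := by
  intro x0 x1
  calc ((sinf x0 (sneg x1)) : α)
    _ = (sneg (ssup (sneg x0) x1)) := by conv_lhs => rw [← rf_e99 x0 x1]
    _ = (sneg (ssup x1 (sneg x0))) := by conv_lhs => enter [1]; rw [sup_comm (sneg x0) x1]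

private theorem rf_e353 : ∀ x0 x1 : α, (sinf x0 (sneg x1)) = (sinf (sneg x1) x0) := by
  intro x0 x1
  calc ((sinf x0 (sneg x1)) : α)
    _ = (sneg (ssup x1 (sneg x0))) := by conv_lhs => rw [rf_e184 x0 x1]
    _ = (sinf (sneg x1) x0) := by conv_lhs => rw [rf_e100 x1 x0]

private theorem rf_e368 : ∀ x0 x1 : α, x0 = (ssup x0 (sinf (sneg x1) x0)) := by
  intro x0 x1
  calc (x0 : α)
    _ = (ssup x0 (sinf x0 (sneg x1))) := by conv_lhs => rw [← absorb2 x0 (sneg x1)]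
    _ = (ssup x0 (sinf (sneg x1) x0)) := by conv_lhs => enter [2]; rw [rf_e353 x0 x1]

private theorem rf_e394 : ∀ x0 x1 : α, x0 = (ssup x0 (sinf x1 x0)) := by
  intro x0 x1
  calc (x0 : α)
    _ = (ssup x0 (sinf (sneg (sneg x1)) x0)) := by conv_lhs => rw [rf_e368 x0 (sneg x1)]
    _ = (ssup x0 (sinf x1 x0)) := by conv_lhs => enter [2, 1]; rw [sn3' x1]

private theorem rf_e422 : ∀ x0 x1 x2 : α, x0 = (ssup x0 (sinf x1 (sinf x2 x0))) := by
  intro x0 x1 x2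
  calc (x0 : α)
    _ = (ssup x0 (sinf (sinf x1 x2) x0)) := by conv_lhs => rw [rf_e394 x0 (sinf x1 x2)]
    _ = (ssup x0 (sinf x1 (sinf x2 x0))) := by conv_lhs => enter [2]; rw [inf_assoc x1 x2 x0]

private theorem rf_e465 : ∀ x0 x1 x2 : α, x0 = (ssup x0 (sinf x1 (sinf x0 x2))) := by
  intro x0 x1 x2
  calc (x0 : α)
    _ = (ssup x0 (sinf x1 (sinf x2 x0))) := by conv_lhs => rw [rf_e422 x0 x1 x2]
    _ = (ssup x0 (sinf x1 (sinf x0 x2))) := by conv_lhs => enter [2, 2]; rw [inf_comm x2 x0]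

private theorem rf_e112 : ∀ x0 : α, (sinf sone (snimp x0 x0)) = (snimp x0 x0) := by
  intro x0
  calc ((sinf sone (snimp x0 x0)) : α)
    _ = (sinf (snimp x0 x0) sone) := by conv_lhs => rw [← inf_comm (snimp x0 x0) sone]
    _ = (snimp x0 x0) := by conv_lhs => rw [top_rr x0]

private theorem rf_e522 : ∀ x0 x1 : α, sone = (ssup sone (sinf x0 (snimp x1 x1))) := by
  intro x0 x1
  calc (sone : α)
    _ = (ssup sone (sinf x0 (sinf sone (snimp x1 x1)))) := by conv_lhs => rw [rf_e465 sone x0 (snimp x1 x1)]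
    _ = (ssup sone (sinf x0 (snimp x1 x1))) := by conv_lhs => enter [2, 2]; rw [rf_e112 x1]

private theorem rf_e61 : ∀ x0 : α, (sinf x0 (ssup (sneg x0) x0)) = (sinf x0 (snimp x0 x0)) := by
  intro x0
  calc ((sinf x0 (ssup (sneg x0) x0)) : α)
    _ = (sinf x0 (snimp x0 (sinf x0 x0))) := by conv_lhs => rw [← sn6' x0 x0]
    _ = (sinf x0 (snimp x0 x0)) := by conv_lhs => enter [2, 2]; rw [inf_idem x0]

private theorem rf_e22 : ∀ x0 x1 : α, (sneg (sinf (sneg x0) x1)) = (ssup x0 (sneg x1)) := by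
  intro x0 x1
  calc ((sneg (sinf (sneg x0) x1)) : α)
    _ = (ssup (sneg (sneg x0)) (sneg x1)) := by conv_lhs => rw [sn4' (sneg x0) x1]
    _ = (ssup x0 (sneg x1)) := by conv_lhs => enter [1]; rw [sn3' x0]

private theorem rf_e138 : ∀ x0 x1 : α, (ssup x0 (sneg x1)) = (sneg (sinf x1 (sneg x0))) := by
  intro x0 x1
  calc ((ssup x0 (sneg x1)) : α)
    _ = (sneg (sinf (sneg x0) x1)) := by conv_lhs => rw [← rf_e22 x0 x1]
    _ = (sneg (sinf x1 (sneg x0))) := by conv_lhs => enter [1]; rw [inf_comm (sneg x0) x1]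

private theorem rf_e23 : ∀ x0 x1 : α, (sneg (sinf x0 (sneg x1))) = (ssup (sneg x0) x1) := by
  intro x0 x1
  calc ((sneg (sinf x0 (sneg x1))) : α)
    _ = (ssup (sneg x0) (sneg (sneg x1))) := by conv_lhs => rw [sn4' x0 (sneg x1)]
    _ = (ssup (sneg x0) x1) := by conv_lhs => enter [2]; rw [sn3' x1]

private theorem rf_e202 : ∀ x0 x1 : α, (ssup x0 (sneg x1)) = (ssup (sneg x1) x0) := by
  intro x0 x1
  calc ((ssup x0 (sneg x1)) : α)
    _ = (sneg (sinf x1 (sneg x0))) := by conv_lhs => rw [rf_e138 x0 x1]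
    _ = (ssup (sneg x1) x0) := by conv_lhs => rw [rf_e23 x1 x0]

private theorem rf_e203 : ∀ x0 x1 : α, x0 = (sinf x0 (ssup (sneg x1) x0)) := by
  intro x0 x1
  calc (x0 : α)
    _ = (sinf x0 (ssup x0 (sneg x1))) := by conv_lhs => rw [← sn1' x0 (sneg x1)]
    _ = (sinf x0 (ssup (sneg x1) x0)) := by conv_lhs => enter [2]; rw [rf_e202 x0 x1]

private theorem rf_e1898 : ∀ x0 : α, x0 = (sinf x0 (snimp x0 x0)) := by
  intro x0
  calc (x0 : α)
    _ = (sinf x0 (ssup (sneg x0) x0)) := by conv_lhs => rw [rf_e203 x0 x0]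
    _ = (sinf x0 (snimp x0 x0)) := by conv_lhs => rw [rf_e61 x0]

private theorem rf_e1914 : ∀ x0 : α, sone = (ssup sone x0) := by
  intro x0
  calc (sone : α)
    _ = (ssup sone (sinf x0 (snimp x0 x0))) := by conv_lhs => rw [rf_e522 x0 x0]
    _ = (ssup sone x0) := by conv_lhs => enter [2]; rw [← rf_e1898 x0]

private theorem rf_e1930 : ∀ x0 : α, (sinf (sneg sone) x0) = (sneg sone) := by
  intro x0
  calc ((sinf (sneg sone) x0) : α)
    _ = (sneg (ssup sone (sneg x0))) := by conv_lhs => rw [← rf_e100 sone x0]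
    _ = (sneg sone) := by conv_lhs => enter [1]; rw [← rf_e1914 (sneg x0)]

private theorem rf_e2012 : ∀ x0 : α, sone = (snimp x0 (sinf x0 (snimp (sneg sone) (sneg sone)))) := by
  intro x0
  calc (sone : α)
    _ = (snimp x0 (sinf x0 (snimp (sneg sone) (sinf (sneg sone) (sneg (snimp x0 sone)))))) := by conv_lhs => rw [← rf_e50 x0 sone]
    _ = (snimp x0 (sinf x0 (snimp (sneg sone) (sneg sone)))) := by conv_lhs => enter [2, 2, 2]; rw [rf_e1930 (sneg (snimp x0 sone))]

private theorem rf_e2011 : (sone : α) = (snimp (sneg sone) (sneg sone)) := by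
  calc (sone : α)
    _ = (snimp (sneg sone) (sinf (sneg sone) (snimp (sneg sone) (sinf (sneg sone) (sneg (snimp (sneg sone) sone)))))) := by conv_lhs => rw [← rf_e50 (sneg sone) sone]
    _ = (snimp (sneg sone) (sneg sone)) := by conv_lhs => enter [2]; rw [rf_e1930 (snimp (sneg sone) (sinf (sneg sone) (sneg (snimp (sneg sone) sone))))]

private theorem rf_e228 : ∀ x0 x1 : α, x0 = (sinf x0 (ssup x1 x0)) := by
  intro x0 x1
  calc (x0 : α)
    _ = (sinf x0 (ssup (sneg (sneg x1)) x0)) := by conv_lhs => rw [rf_e203 x0 (sneg x1)]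
    _ = (sinf x0 (ssup x1 x0)) := by conv_lhs => enter [2, 1]; rw [sn3' x1]

private theorem rf_e1931 : ∀ x0 : α, x0 = (sinf x0 sone) := by
  intro x0
  calc (x0 : α)
    _ = (sinf x0 (ssup sone x0)) := by conv_lhs => rw [rf_e228 x0 sone]
    _ = (sinf x0 sone) := by conv_lhs => enter [2]; rw [← rf_e1914 x0]

private theorem rf_e2289 : ∀ x0 : α, sone = (snimp x0 x0) := by
  intro x0
  calc (sone : α)
    _ = (snimp x0 (sinf x0 (snimp (sneg sone) (sneg sone)))) := by conv_lhs => rw [rf_e2012 x0]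
    _ = (snimp x0 (sinf x0 sone)) := by conv_lhs => enter [2, 2]; rw [← rf_e2011 (α := α)]
    _ = (snimp x0 x0) := by conv_lhs => enter [2]; rw [← rf_e1931 x0]

private theorem snrefl : ∀ x : α, (snimp x x) = sone := by
  intro x
  have LL : ((snimp x x) : α) = sone := by
    calc ((snimp x x) : α)
      _ = sone := by conv_lhs => rw [← rf_e2289 x]
  have RR : (sone : α) = sone := by
    rfl
  exact LL.trans RR.symm

private theorem one_top : ∀ x : α, sinf sone x = x := by
  intro x
  calc sinf sone x
    _ = sinf x sone := inf_comm sone x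
    _ = sinf x (snimp x x) := by rw [← snrefl x]
    _ = sinf x (snimp x (sinf x x)) := by conv_lhs => enter [2, 2]; rw [← inf_idem x]
    _ = sinf x (ssup (sneg x) x) := sn6' x x
    _ = sinf x (ssup x (sneg x)) := by rw [sup_comm (sneg x) x]
    _ = x := sn1' x (sneg x)

private theorem bot : ∀ x : α, ssup (sneg sone) x = x := by
  intro x
  calc ssup (sneg sone) x
    _ = ssup (sneg sone) (sneg (sneg x)) := by conv_lhs => enter [2]; rw [← sn3' x]
    _ = sneg (sinf sone (sneg x)) := by rw [← sn4' sone (sneg x)]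
    _ = sneg (sneg x) := by rw [one_top (sneg x)]
    _ = x := sn3' x

private theorem mp' : ∀ x : α, snimp sone x = sone → x = sone := by
  intro x h
  have h2 := sn6' sone x
  rw [one_top, one_top, one_top, bot] at h2
  rw [h] at h2
  exact h2.symm

end SNProofAux

open SNProofAux in
/-- In a semi-Nelson algebra, the relation `x →_N y = 1` is transitive. -/
theorem impN_trans {α : Type*} [SemiNelsonAlgebra α] {a b c : α}
    (hab : impN a b = sone) (hbc : impN b c = sone) : impN a c = sone := by
  simp only [impN] at hab hbc ⊢
  have hP : snimp (sinf a b) (sinf (sinf a b) c) = sone := by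
    rw [← sn7' a b c, hbc, inf_comm a sone, one_top a]
    exact snrefl a
  have hQ : snimp (sinf a c) (sinf (sinf a c) b) = sone := by
    rw [inf_comm a c, ← sn7' c a b, hab, inf_comm c sone, one_top c]
    exact snrefl c
  have hAC : sinf (sinf a b) (sinf a c) = sinf (sinf a b) c := by
    rw [← inf_assoc (sinf a b) a c, inf_comm (sinf a b) a, ← inf_assoc a a b, inf_idem a]
  have hAB : sinf (sinf a c) (sinf a b) = sinf (sinf a c) b := by
    rw [← inf_assoc (sinf a c) a b, inf_comm (sinf a c) a, ← inf_assoc a a c, inf_idem a]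
  have h9 := sn9' (sinf a b) (sinf a c) a
  rw [hAC, hP] at h9
  rw [hAB, hQ] at h9
  rw [hab] at h9
  simp only [one_top] at h9
  exact mp' _ (mp' _ (mp' _ h9))
end

section
/- Let A be a semi-Nelson algebra with center c (∼c = c) such that its quotient sH(A) by the congruence ≡ is a dually hemimorphic semi-Heyting algebra, and let E = {[a]∨[∼a] : a ∈ A} be the i-filter arising from the image of A in V_k(sH(A)). If the image subalgebra is closed under the twist operation (p,q)' = (p†, q∧(p†⇒p)) applied to ([1],[∼1]), then E is the whole quotient algebra sH(A); equivalently, in a dually hemimorphic semi-Nelson algebra the filter E equals sH(A) and h(a) = ([a],[∼a]) is an isomorphism of A onto V_k(dsH(A)). -/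
open SemiNelsonOps

/-- The relation `x ≡ y` iff `x → y = 1` and `y → x = 1`. -/
def nrel {α : Type*} [SemiNelsonAlgebra α] (x y : α) : Prop :=
  snimp x y = sone ∧ snimp y x = sone

/-- A dually hemimorphic semi-Nelson algebra: a semi-Nelson algebra with a
unary operation `'` satisfying DSN1–DSN7. -/
class DualHemiSemiNelsonAlgebra (α : Type*) extends SemiNelsonAlgebra α where
  pr : α → α
  dsn1 : pr (sneg sone) = sone
  dsn2 : snimp (pr sone) (sneg sone) = sone
  dsn3 : ∀ x y : α,
    snimp (sinf (sinf (snimp x y) (snimp y x)) (pr x))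
      (pr (sinf (sinf (snimp x y) (snimp y x)) y)) = sone
  dsn4 : ∀ x : α, snimp (sneg (pr x)) (sinf (sneg x) (snimp (pr x) x)) = sone
  dsn5 : ∀ x : α, snimp (sinf (sneg x) (snimp (pr x) x)) (sneg (pr x)) = sone
  dsn6 : ∀ x y : α, snimp (pr (sinf x y)) (ssup (pr x) (pr y)) = sone
  dsn7 : ∀ x y : α, snimp (ssup (pr x) (pr y)) (pr (sinf x y)) = sone

open DualHemiSemiNelsonAlgebra


namespace SNTheory

open SemiNelsonAlgebra

variable {α : Type*} [SemiNelsonAlgebra α]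

/-! ### Sholander: SN1,SN2 give a distributive lattice -/

private lemma inf_idem' (a : α) : sinf a a = a := by
  have hstar : ∀ b : α, b = ssup (sinf b b) (sinf b b) := by
    intro b
    have h := sn2 b b b
    rwa [sn1 b b] at h
  have hss : sinf (sinf a a) a = sinf a a := by
    have h := sn1 (sinf a a) (sinf a a)
    rwa [← hstar a] at h
  have h3 := sn2 a (sinf a a) (sinf a a)
  rw [← hstar a, hss, ← hstar a] at h3
  exact h3

private lemma sup_idem' (a : α) : ssup a a = a := by
  have h := sn2 a a a
  rw [sn1 a a, inf_idem'] at h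
  exact h.symm

private lemma inf_comm' (a b : α) : sinf a b = sinf b a := by
  have h := sn2 a b b
  rw [sup_idem', sup_idem'] at h
  exact h

/-- `(b ⊓ a) ⊔ a = a` -/
private lemma absorb2 (a b : α) : ssup (sinf b a) a = a := by
  have h := sn2 a a b
  rw [sn1 a b, inf_idem'] at h
  exact h.symm

private lemma inf_ba_a (a b : α) : sinf (sinf b a) a = sinf b a := by
  have h := sn1 (sinf b a) a
  rwa [absorb2] at h

/-- `a ⊔ (b ⊓ a) = a` -/
private lemma s6a (a b : α) : ssup a (sinf b a) = a := by
  have hd : sinf (sinf b a) (ssup a (sinf b a)) = sinf b a := by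
    have h := sn2 (sinf b a) a (sinf b a)
    rw [inf_idem', inf_comm' a (sinf b a), inf_ba_a, sup_idem'] at h
    exact h
  have h := sn2 (ssup a (sinf b a)) a (sinf b a)
  rw [inf_idem', hd, sn1 a (sinf b a), absorb2] at h
  exact h

/-- `x ⊓ (y ⊔ x) = x` -/
private lemma s6 (x y : α) : sinf x (ssup y x) = x := by
  have h := sn2 x y x
  rw [inf_idem', s6a x y] at h
  exact h

private lemma sup_comm' (a b : α) : ssup a b = ssup b a := by
  have h := sn2 (ssup a b) a b
  rw [inf_idem', s6 b a, sn1 a b] at h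
  exact h

/-- distributivity in friendly form -/
private lemma dist' (x y z : α) : sinf x (ssup y z) = ssup (sinf x y) (sinf x z) := by
  rw [sn2, inf_comm' z x, inf_comm' y x, sup_comm']

private lemma sup_inf_self' (a c : α) : ssup a (sinf a c) = a := by
  rw [inf_comm' a c]; exact s6a a c

private lemma sup_assoc' (a b c : α) : ssup (ssup a b) c = ssup a (ssup b c) := by
  set L := ssup (ssup a b) c with hL
  set R := ssup a (ssup b c) with hR
  have haL : sinf a L = a := by
    rw [hL, dist', sn1 a b, sup_inf_self']
  have hbL : sinf b L = b := by
    rw [hL, dist', s6 b a, sup_inf_self']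
  have hcL : sinf c L = c := s6 c (ssup a b)
  have haR : sinf a R = a := sn1 a (ssup b c)
  have hbR : sinf b R = b := by
    rw [hR, dist', sn1 b c, inf_comm' b a, absorb2]
  have hcR : sinf c R = c := by
    rw [hR, dist', s6 c b, inf_comm' c a, absorb2]
  have hLR : sinf L R = R := by
    rw [hR, dist', dist', inf_comm' L a, haL, inf_comm' L b, hbL, inf_comm' L c, hcL]
  have hRL : sinf R L = L := by
    rw [hL, dist', dist', inf_comm' R a, haR, inf_comm' R b, hbR, inf_comm' R c, hcR]
  calc L = sinf R L := hRL.symm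
    _ = sinf L R := inf_comm' R L
    _ = R := hLR

private lemma sup_dist' (x y z : α) : ssup x (sinf y z) = sinf (ssup x y) (ssup x z) := by
  have h : sinf (ssup x y) (ssup x z) = ssup x (sinf y z) := by
    calc sinf (ssup x y) (ssup x z)
        = ssup (sinf (ssup x y) x) (sinf (ssup x y) z) := dist' _ _ _
      _ = ssup x (sinf (ssup x y) z) := by rw [inf_comm' (ssup x y) x, sn1 x y]
      _ = ssup x (ssup (sinf z x) (sinf z y)) := by rw [inf_comm' (ssup x y) z, dist' z x y]
      _ = ssup (ssup x (sinf z x)) (sinf z y) := (sup_assoc' _ _ _).symm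
      _ = ssup x (sinf z y) := by rw [s6a x z]
      _ = ssup x (sinf y z) := by rw [inf_comm' z y]
  exact h.symm

private lemma inf_assoc' (a b c : α) : sinf (sinf a b) c = sinf a (sinf b c) := by
  set L := sinf (sinf a b) c with hL
  set R := sinf a (sinf b c) with hR
  have haL : ssup a L = a := by
    rw [hL, sup_dist', sup_inf_self', sn1 a c]
  have hbL : ssup b L = b := by
    rw [hL, sup_dist', s6a b a, sn1 b c]
  have hcL : ssup c L = c := by
    rw [hL, sup_dist', sup_idem', inf_comm' (ssup c (sinf a b)) c, sn1 c (sinf a b)]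
  have haR : ssup a R = a := by
    rw [hR, sup_dist', sup_idem', sn1 a (sinf b c)]
  have hbR : ssup b R = b := by
    rw [hR, sup_dist', sup_inf_self', inf_comm' (ssup b a) b, sn1 b a]
  have hcR : ssup c R = c := by
    rw [hR, sup_dist', s6a c b, inf_comm' (ssup c a) c, sn1 c a]
  have hRL : ssup R L = L := by
    rw [hL, sup_dist', sup_dist', sup_comm' R a, haR, sup_comm' R b, hbR, sup_comm' R c, hcR]
  have hLR : ssup L R = R := by
    rw [hR, sup_dist', sup_dist', sup_comm' L a, haL, sup_comm' L b, hbL, sup_comm' L c, hcL]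
  calc L = ssup R L := hRL.symm
    _ = ssup L R := sup_comm' R L
    _ = R := hLR

noncomputable instance (priority := 100) snDistribLattice : DistribLattice α :=
  letI : Max α := ⟨ssup⟩
  letI : Min α := ⟨sinf⟩
  letI lat : Lattice α := Lattice.mk' sup_comm' sup_assoc' inf_comm' inf_assoc'
    sup_inf_self' (fun a b => sn1 a b)
  DistribLattice.ofInfSupLe (fun a b c => le_of_eq (dist' a b c))

lemma inf_def (x y : α) : x ⊓ y = sinf x y := rfl
lemma sup_def (x y : α) : x ⊔ y = ssup x y := rfl


local prefix:100 "∼" => sneg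

/-! ### basic conversions -/

lemma sn6' (x y : α) : x ⊓ impN x y = x ⊓ (∼x ⊔ y) := sn6 x y
lemma sn7' (x y z : α) : impN x (impN y z) = impN (x ⊓ y) z := sn7 x y z
lemma sn5' (x y : α) : x ⊓ ∼x = (x ⊓ ∼x) ⊓ (y ⊔ ∼y) := sn5 x y
lemma impN_eq (x y : α) : impN x y = snimp x (x ⊓ y) := rfl

lemma neg_inf (x y : α) : ∼(x ⊓ y) = ∼x ⊔ ∼y := sn4 x y

lemma neg_sup (x y : α) : ∼(x ⊔ y) = ∼x ⊓ ∼y := by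
  have h : sneg (sinf (sneg x) (sneg y)) = ssup x y := by
    rw [sn4, sn3, sn3]
  have h2 := congrArg sneg h
  rw [sn3] at h2
  exact h2.symm

/-! ### top and bottom -/

lemma m4 (x : α) : x ⊓ snimp x x = x := by
  have A := sn6' x x
  rw [impN_eq, inf_idem] at A
  rw [A, inf_sup_left, inf_idem]
  exact sup_eq_right.mpr inf_le_left

lemma imp_selfC (x : α) : snimp (snimp x x) (snimp x x) = sone := by
  have A := sn8 x x x
  have e1 : impN x x = snimp x x := by rw [impN_eq, inf_idem]
  have e2 : impN (snimp x x) (snimp x x) = snimp (snimp x x) (snimp x x) := by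
    rw [impN_eq, inf_idem]
  rw [e1, e2] at A
  rw [sn7'] at A
  rw [inf_idem] at A
  rw [impN_eq, m4] at A
  exact A

lemma inf_one (x : α) : x ⊓ sone = x := by
  have hc : snimp x x ⊓ sone = snimp x x := by
    have A := sn6' (snimp x x) (snimp x x)
    rw [impN_eq, inf_idem, imp_selfC] at A
    rw [A, inf_sup_left, inf_idem]
    exact sup_eq_right.mpr inf_le_left
  conv_lhs => rw [← m4 x]
  rw [inf_assoc, hc, m4]

lemma one_inf (x : α) : sone ⊓ x = x := by rw [inf_comm]; exact inf_one x
lemma le_one' (x : α) : x ≤ sone := inf_eq_left.mp (inf_one x)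
lemma sup_one (x : α) : x ⊔ sone = sone := sup_eq_right.mpr (le_one' x)
lemma one_sup (x : α) : sone ⊔ x = sone := by rw [sup_comm]; exact sup_one x

lemma negone_inf (x : α) : ∼sone ⊓ x = ∼sone := by
  conv_lhs => rw [← sn3 x]
  rw [← neg_sup, one_sup]

lemma inf_negone (x : α) : x ⊓ ∼sone = ∼sone := by rw [inf_comm]; exact negone_inf x
lemma negone_le (x : α) : (∼sone : α) ≤ x := inf_eq_left.mp (negone_inf x)
lemma negone_sup (x : α) : ∼sone ⊔ x = x := sup_eq_right.mpr (negone_le x)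
lemma sup_negone (x : α) : x ⊔ ∼sone = x := sup_eq_left.mpr (negone_le x)

lemma impN_one_eq (y : α) : impN sone y = y := by
  have A := sn6' sone y
  rw [one_inf, one_inf, negone_sup] at A
  exact A

lemma snimp_one_eq (y : α) : snimp sone y = y := by
  have A := impN_one_eq y
  rw [impN_eq, one_inf] at A
  exact A

/-! ### reflexivity -/

lemma snimp_self (x : α) : snimp x x = sone := by
  have A := sn8 sone sone x
  rw [impN_one_eq, snimp_one_eq] at A
  rw [impN_one_eq, impN_one_eq] at A
  rw [impN_eq, inf_idem] at A
  exact A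

lemma impN_refl (x : α) : impN x x = sone := by
  rw [impN_eq, inf_idem]; exact snimp_self x

lemma impN_one (x : α) : impN x sone = sone := by
  rw [impN_eq, inf_one]; exact snimp_self x

lemma impN_of_inf_eq {x y : α} (h : x ⊓ y = x) : impN x y = sone := by
  rw [impN_eq, h]; exact snimp_self x

lemma impN_of_le {x y : α} (h : x ≤ y) : impN x y = sone :=
  impN_of_inf_eq (inf_eq_left.mpr h)

/-! ### order-theoretic consequences -/

lemma o1 {u v : α} (h : impN u v = sone) : u = (u ⊓ ∼u) ⊔ (u ⊓ v) := by
  have A := sn6' u v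
  rw [h, inf_one, inf_sup_left] at A
  exact A

lemma junk_bot (x : α) : impN (x ⊓ ∼x) (∼sone) = sone := by
  have A := sn11 x x
  rw [snimp_self] at A
  exact A

lemma botN (v : α) : impN (∼sone) v = sone := by
  rw [impN_eq, negone_inf]; exact snimp_self _

lemma g82 (x z : α) : impN (x ⊓ snimp x z) z = sone := by
  have A := sn8 x sone z
  rw [impN_one, snimp_one_eq] at A
  rw [impN_one_eq] at A
  rw [impN_one_eq] at A
  rw [sn7'] at A
  exact A

lemma imp_to_impN {u w : α} (h : snimp u w = sone) : impN u w = sone := by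
  have A := g82 u w
  rw [h, inf_one] at A
  exact A

lemma mp9 {x y : α} (h1 : impN x y = sone) (h2 : impN y x = sone) (z : α) :
    impN (snimp z x) (snimp z y) = sone := by
  have A := sn9 x y z
  rw [h1, h2, impN_one_eq, impN_one_eq] at A
  exact A

lemma mp8 {x y : α} (h1 : impN x y = sone) (h2 : impN y x = sone) (z : α) :
    impN (snimp x z) (snimp y z) = sone := by
  have A := sn8 x y z
  rw [h1, h2, impN_one_eq, impN_one_eq] at A
  exact A

lemma nrel_of {u w : α} (h1 : impN u w = sone) (h2 : impN w u = sone) :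
    snimp u w = sone := by
  have A := mp9 h1 h2 u
  rw [snimp_self, impN_one_eq] at A
  exact A

/-! ### transitivity and congruence of the weak implication -/

lemma impN_trans {u v w : α} (h1 : impN u v = sone) (h2 : impN v w = sone) :
    impN u w = sone := by
  have stepa : impN (u ⊓ v) w = sone := by
    have A := sn7' u v w
    rw [h2, impN_one] at A
    exact A.symm
  have stepb : impN (w ⊓ u) v = sone := by
    have A := sn7' w u v
    rw [h1, impN_one] at A
    exact A.symm
  have p1 : impN (u ⊓ v) (u ⊓ w) = sone := by
    have e : impN (u ⊓ v) (u ⊓ w) = impN (u ⊓ v) w := by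
      rw [impN_eq, impN_eq]
      congr 1
      ac_rfl
    rw [e]; exact stepa
  have p2 : impN (u ⊓ w) (u ⊓ v) = sone := by
    have e : impN (u ⊓ w) (u ⊓ v) = impN (w ⊓ u) v := by
      rw [impN_eq, impN_eq]
      congr 1 <;> ac_rfl
    rw [e]; exact stepb
  have A := sn9 (u ⊓ v) (u ⊓ w) u
  rw [p1, p2, impN_one_eq, impN_one_eq] at A
  rw [← impN_eq, ← impN_eq] at A
  rw [h1, impN_one_eq] at A
  exact A

lemma impN_inf_elim {s a b : α} (h : impN s (a ⊓ b) = sone) : impN s a = sone :=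
  impN_trans h (impN_of_le inf_le_left)

lemma impN_inf_intro {s a b : α} (ha : impN s a = sone) (hb : impN s b = sone) :
    impN s (a ⊓ b) = sone := by
  have h1 : impN s (s ⊓ a) = sone := by
    have e : impN s (s ⊓ a) = impN s a := by
      rw [impN_eq, impN_eq]
      congr 1
      ac_rfl
    rw [e]; exact ha
  have h2 : impN (s ⊓ a) b = sone := by
    have A := sn7' a s b
    rw [hb, impN_one] at A
    have e : impN (s ⊓ a) b = impN (a ⊓ s) b := by
      congr 1
      ac_rfl
    rw [e]; exact A.symm
  have h4 : impN (s ⊓ a) (a ⊓ b) = sone := by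
    have e : impN (s ⊓ a) (a ⊓ b) = impN (s ⊓ a) b := by
      rw [impN_eq, impN_eq]
      congr 1
      ac_rfl
    rw [e]; exact h2
  exact impN_trans h1 h4

lemma impN_inf_cong {u u' : α} (h : impN u u' = sone) (w : α) :
    impN (u ⊓ w) (u' ⊓ w) = sone := by
  have h2 : impN (u ⊓ w) u' = sone := by
    have A := sn7' w u u'
    rw [h, impN_one] at A
    have e : impN (u ⊓ w) u' = impN (w ⊓ u) u' := by
      congr 1
      ac_rfl
    rw [e]; exact A.symm
  exact impN_inf_intro h2 (impN_of_le inf_le_right)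

/-! ### the junk-equality and the core lemma for joins -/

lemma e2lem {u u' : α} (h : snimp u u' = sone) :
    u ⊓ ∼u' = (u ⊓ ∼u') ⊓ (∼u ⊔ u') := by
  have A0 := sn11 u u'
  rw [h] at A0
  have B := o1 (show impN (u ⊓ ∼u') (∼sone) = sone from A0)
  rw [inf_negone, sup_negone] at B
  rw [neg_inf, sn3] at B
  exact B

lemma ve_core {t y : α} (h : t = (t ⊓ ∼t) ⊔ (t ⊓ y)) : impN t y = sone := by
  have hti : t ⊓ impN t y = t := by
    have A := sn6' t y
    rw [inf_sup_left, ← h] at A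
    exact A
  have hA1 : impN t (t ⊓ y) = impN t y := by
    rw [impN_eq, impN_eq]
    congr 1
    ac_rfl
  have A := sn9 t (t ⊓ y) sone
  rw [snimp_one_eq, snimp_one_eq] at A
  rw [hA1] at A
  rw [sn7', sn7'] at A
  rw [impN_of_le (inf_le_left : t ⊓ y ≤ t), inf_one] at A
  rw [inf_comm (impN t y) t, hti] at A
  exact A

lemma split_le {x a b c : α} (h : x ≤ a ⊔ b) (h1 : x ⊓ a ≤ c) (h2 : x ⊓ b ≤ c) :
    x ≤ c := by
  calc x = x ⊓ (a ⊔ b) := (inf_eq_left.mpr h).symm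
    _ = (x ⊓ a) ⊔ (x ⊓ b) := inf_sup_left x a b
    _ ≤ c := sup_le h1 h2

lemma kleene_le (x y : α) : x ⊓ ∼x ≤ y ⊔ ∼y := by
  conv_lhs => rw [sn5' x y]
  exact inf_le_right

/-- congruence of ⊔ with respect to the weak equivalence -/
lemma sup_cong {u u' : α} (h1 : impN u u' = sone) (h2 : impN u' u = sone) (w : α) :
    impN (w ⊔ u) (w ⊔ u') = sone := by
  have hsn : snimp u u' = sone := nrel_of h1 h2
  have he2 : u ⊓ ∼u' ≤ ∼u ⊔ u' := by
    conv_lhs => rw [e2lem hsn]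
    exact inf_le_right
  have hO1 := o1 h1
  apply ve_core
  refine le_antisymm ?_ (sup_le inf_le_left inf_le_left)
  have hw : w ≤ ((w ⊔ u) ⊓ ∼(w ⊔ u)) ⊔ ((w ⊔ u) ⊓ (w ⊔ u')) :=
    le_sup_of_le_right (le_inf le_sup_left le_sup_left)
  refine sup_le hw ?_
  have huu' : u ⊓ u' ≤ ((w ⊔ u) ⊓ ∼(w ⊔ u)) ⊔ ((w ⊔ u) ⊓ (w ⊔ u')) :=
    le_sup_of_le_right
      (le_inf (inf_le_left.trans le_sup_right) (inf_le_right.trans le_sup_right))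
  have hjunk : u ⊓ ∼u ≤ ((w ⊔ u) ⊓ ∼(w ⊔ u)) ⊔ ((w ⊔ u) ⊓ (w ⊔ u')) := by
    refine split_le (kleene_le u w) (inf_le_right.trans hw) ?_
    refine split_le (inf_le_left.trans (kleene_le u u')) ?_ ?_
    · exact le_trans
        (le_inf (inf_le_left.trans (inf_le_left.trans inf_le_left)) inf_le_right) huu'
    · have hq : ((u ⊓ ∼u) ⊓ ∼w) ⊓ ∼u' ≤ ∼u ⊔ u' :=
        le_trans
          (le_inf (inf_le_left.trans (inf_le_left.trans inf_le_left)) inf_le_right) he2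
      refine split_le hq ?_ ?_
      · refine le_sup_of_le_left (le_inf ?_ ?_)
        · exact inf_le_left.trans
            ((inf_le_left.trans (inf_le_left.trans inf_le_left)).trans le_sup_right)
        · rw [neg_sup]
          refine le_inf ?_ inf_le_right
          exact inf_le_left.trans (inf_le_left.trans inf_le_right)
      · exact le_trans
          (le_inf (inf_le_left.trans (inf_le_left.trans (inf_le_left.trans inf_le_left)))
            inf_le_right) huu'
  calc u = (u ⊓ ∼u) ⊔ (u ⊓ u') := hO1
    _ ≤ _ := sup_le hjunk huu'


lemma sup_cong_left {u u' : α} (h1 : impN u u' = sone) (h2 : impN u' u = sone) (w : α) :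
    impN (u ⊔ w) (u' ⊔ w) = sone := by
  have h := sup_cong h1 h2 w
  have ee : impN (w ⊔ u) (w ⊔ u') = impN (u ⊔ w) (u' ⊔ w) := by
    rw [sup_comm w u, sup_comm w u']
  rw [ee] at h
  exact h

/-! ### the `E6` lemma used for injectivity -/

lemma e6lem {a b : α} (hab : impN a b = sone) (hba : impN b a = sone) :
    ((a ⊔ b) ⊓ (∼a ⊓ ∼b)) ⊔ a = ((a ⊔ b) ⊓ (∼a ⊓ ∼b)) ⊔ b := by
  have H1 := o1 hab
  have H2 := o1 hba
  have cond1 : a ⊔ b = ((a ⊔ b) ⊓ ∼(a ⊔ b)) ⊔ ((a ⊔ b) ⊓ a) := by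
    refine le_antisymm ?_ (sup_le inf_le_left inf_le_left)
    refine sup_le (le_sup_of_le_right (le_inf le_sup_left le_rfl)) ?_
    have hjb : b ⊓ ∼b ≤ ((a ⊔ b) ⊓ ∼(a ⊔ b)) ⊔ ((a ⊔ b) ⊓ a) := by
      refine split_le (kleene_le b a) ?_ ?_
      · exact le_sup_of_le_right (le_inf (inf_le_right.trans le_sup_left) inf_le_right)
      · refine le_sup_of_le_left
          (le_inf (inf_le_left.trans (inf_le_left.trans le_sup_right)) ?_)
        rw [neg_sup]
        exact le_inf inf_le_right (inf_le_left.trans inf_le_right)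
    calc b = (b ⊓ ∼b) ⊔ (b ⊓ a) := H2
      _ ≤ _ := sup_le hjb
        (le_sup_of_le_right (le_inf (inf_le_left.trans le_sup_right) inf_le_right))
  have cond2 : a ⊔ b = ((a ⊔ b) ⊓ ∼(a ⊔ b)) ⊔ ((a ⊔ b) ⊓ b) := by
    refine le_antisymm ?_ (sup_le inf_le_left inf_le_left)
    refine sup_le ?_ (le_sup_of_le_right (le_inf le_sup_right le_rfl))
    have hja : a ⊓ ∼a ≤ ((a ⊔ b) ⊓ ∼(a ⊔ b)) ⊔ ((a ⊔ b) ⊓ b) := by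
      refine split_le (kleene_le a b) ?_ ?_
      · exact le_sup_of_le_right (le_inf (inf_le_right.trans le_sup_right) inf_le_right)
      · refine le_sup_of_le_left
          (le_inf (inf_le_left.trans (inf_le_left.trans le_sup_left)) ?_)
        rw [neg_sup]
        exact le_inf (inf_le_left.trans inf_le_right) inf_le_right
    calc a = (a ⊓ ∼a) ⊔ (a ⊓ b) := H1
      _ ≤ _ := sup_le hja
        (le_sup_of_le_right (le_inf (inf_le_left.trans le_sup_left) inf_le_right))
  have ixa := ve_core cond1
  have ixb := ve_core cond2
  have he6a : a ⊔ b = ((a ⊔ b) ⊓ (∼a ⊓ ∼b)) ⊔ a := by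
    have A := sn6' (a ⊔ b) a
    rw [ixa, inf_one] at A
    rw [neg_sup, inf_sup_left] at A
    rw [inf_eq_right.mpr (le_sup_left : a ≤ a ⊔ b)] at A
    exact A
  have he6b : a ⊔ b = ((a ⊔ b) ⊓ (∼a ⊓ ∼b)) ⊔ b := by
    have A := sn6' (a ⊔ b) b
    rw [ixb, inf_one] at A
    rw [neg_sup, inf_sup_left] at A
    rw [inf_eq_right.mpr (le_sup_right : b ≤ a ⊔ b)] at A
    exact A
  exact he6a.symm.trans he6b

/-! ### injectivity -/

lemma goal2 {a b : α} (h1 : nrel a b) (h2 : nrel (sneg a) (sneg b)) : a = b := by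
  obtain ⟨hab, hba⟩ := h1
  obtain ⟨hnab, hnba⟩ := h2
  have iab := imp_to_impN hab
  have iba := imp_to_impN hba
  have inab := imp_to_impN hnab
  have inba := imp_to_impN hnba
  have H1 := o1 iab
  have H2 := o1 iba
  have hstar1 : a ⊓ ∼b = ((a ⊓ ∼a) ⊓ ∼b) ⊔ ((a ⊓ b) ⊓ ∼b) := by
    conv_lhs => rw [H1, inf_sup_right]
  have hstar2 : b ⊓ ∼a = ((b ⊓ ∼b) ⊓ ∼a) ⊔ ((b ⊓ a) ⊓ ∼a) := by
    conv_lhs => rw [H2, inf_sup_right]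
  have e7 := e6lem inab inba
  rw [sn3, sn3] at e7
  have e8 := congrArg sneg e7
  rw [neg_sup, neg_sup, sn3, sn3] at e8
  have hJn : ∼((∼a ⊔ ∼b) ⊓ (a ⊓ b)) = (a ⊓ b) ⊔ (∼a ⊔ ∼b) := by
    rw [neg_inf, neg_sup, sn3, sn3, neg_inf]
  rw [hJn] at e8
  -- e8 : ((a⊓b) ⊔ (∼a⊔∼b)) ⊓ a = ((a⊓b) ⊔ (∼a⊔∼b)) ⊓ b
  have hb1 : a ⊓ ∼b ≤ (a ⊓ b) ⊔ (a ⊓ ∼a) := by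
    rw [hstar1]
    exact sup_le (inf_le_left.trans le_sup_right) (inf_le_left.trans le_sup_left)
  have hb2 : b ⊓ ∼a ≤ (a ⊓ b) ⊔ (b ⊓ ∼b) := by
    rw [hstar2]
    refine sup_le (inf_le_left.trans le_sup_right) (inf_le_left.trans ?_)
    rw [inf_comm b a]
    exact le_sup_left
  have key1 : ((a ⊓ b) ⊔ (∼a ⊔ ∼b)) ⊓ a = (a ⊓ b) ⊔ (a ⊓ ∼a) := by
    apply le_antisymm
    · refine split_le (inf_le_left : ((a ⊓ b) ⊔ (∼a ⊔ ∼b)) ⊓ a ≤ (a ⊓ b) ⊔ (∼a ⊔ ∼b)) ?_ ?_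
      · exact inf_le_right.trans le_sup_left
      · refine split_le (inf_le_right : (((a ⊓ b) ⊔ (∼a ⊔ ∼b)) ⊓ a) ⊓ (∼a ⊔ ∼b) ≤ ∼a ⊔ ∼b) ?_ ?_
        · exact le_sup_of_le_right
            (le_inf (inf_le_left.trans (inf_le_left.trans inf_le_right)) inf_le_right)
        · exact le_trans
            (le_inf (inf_le_left.trans (inf_le_left.trans inf_le_right)) inf_le_right) hb1
    · refine sup_le (le_inf le_sup_left inf_le_left) (le_inf ?_ inf_le_left)
      exact le_sup_of_le_right (inf_le_right.trans le_sup_left)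
  have key2 : ((a ⊓ b) ⊔ (∼a ⊔ ∼b)) ⊓ b = (a ⊓ b) ⊔ (b ⊓ ∼b) := by
    apply le_antisymm
    · refine split_le (inf_le_left : ((a ⊓ b) ⊔ (∼a ⊔ ∼b)) ⊓ b ≤ (a ⊓ b) ⊔ (∼a ⊔ ∼b)) ?_ ?_
      · exact inf_le_right.trans le_sup_left
      · refine split_le (inf_le_right : (((a ⊓ b) ⊔ (∼a ⊔ ∼b)) ⊓ b) ⊓ (∼a ⊔ ∼b) ≤ ∼a ⊔ ∼b) ?_ ?_
        · exact le_trans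
            (le_inf (inf_le_left.trans (inf_le_left.trans inf_le_right)) inf_le_right) hb2
        · exact le_sup_of_le_right
            (le_inf (inf_le_left.trans (inf_le_left.trans inf_le_right)) inf_le_right)
    · refine sup_le (le_inf le_sup_left inf_le_right) (le_inf ?_ inf_le_left)
      exact le_sup_of_le_right (inf_le_right.trans le_sup_right)
  calc a = (a ⊓ ∼a) ⊔ (a ⊓ b) := H1
    _ = (a ⊓ b) ⊔ (a ⊓ ∼a) := sup_comm _ _
    _ = ((a ⊓ b) ⊔ (∼a ⊔ ∼b)) ⊓ a := key1.symm
    _ = ((a ⊓ b) ⊔ (∼a ⊔ ∼b)) ⊓ b := e8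
    _ = (a ⊓ b) ⊔ (b ⊓ ∼b) := key2
    _ = (b ⊓ ∼b) ⊔ (b ⊓ a) := by rw [sup_comm, inf_comm a b]
    _ = b := H2.symm

/-! ### dually hemimorphic part -/

section DSN

open DualHemiSemiNelsonAlgebra

variable {β : Type*} [DualHemiSemiNelsonAlgebra β]

lemma d1a : impN (pr (sone : β)) (∼sone) = sone := imp_to_impN (dsn2)

lemma d2a : impN (∼(pr (sone : β))) (∼sone) = sone := by
  have h := imp_to_impN (dsn4 (sone : β))
  exact impN_inf_elim
    (show impN (∼(pr (sone : β))) ((∼sone) ⊓ snimp (pr sone) sone) = sone from h)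

lemma goal1 (x : β) : ∃ a : β, nrel x (ssup a (sneg a)) := by
  refine ⟨x ⊔ pr sone, ?_⟩
  have step2 : impN (∼x ⊓ ∼(pr (sone : β))) (∼sone) = sone :=
    impN_trans (impN_of_le inf_le_right) d2a
  have step2' : impN (∼sone) (∼x ⊓ ∼(pr (sone : β))) = sone := botN _
  have big1 : impN ((x ⊔ pr sone) ⊔ (∼x ⊓ ∼(pr sone))) (x ⊔ pr sone) = sone := by
    have h := sup_cong step2 step2' (x ⊔ pr sone)
    rwa [sup_negone] at h
  have big2 : impN (x ⊔ pr sone) ((x ⊔ pr sone) ⊔ (∼x ⊓ ∼(pr sone))) = sone :=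
    impN_of_le le_sup_left
  have step1 : impN (x ⊔ pr (sone : β)) x = sone := by
    have h := sup_cong d1a (botN _) x
    rwa [sup_negone] at h
  have step1' : impN x (x ⊔ pr (sone : β)) = sone := impN_of_le le_sup_left
  have hxT : impN x ((x ⊔ pr sone) ⊔ (∼x ⊓ ∼(pr sone))) = sone := impN_trans step1' big2
  have hTx : impN ((x ⊔ pr sone) ⊔ (∼x ⊓ ∼(pr sone))) x = sone := impN_trans big1 step1
  rw [← neg_sup] at hxT hTx
  exact ⟨nrel_of hxT hTx, nrel_of hTx hxT⟩

lemma goal3 {b c : β} (h : nrel (sinf b c) (sneg sone)) :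
    ∃ a : β, nrel a b ∧ nrel (sneg a) c := by
  obtain ⟨hbc, -⟩ := h
  have jbc1 : impN (b ⊓ c) (∼sone) = sone :=
    imp_to_impN (show snimp (b ⊓ c) (∼sone) = sone from hbc)
  have jbc2 : impN (∼sone) (b ⊓ c) = sone := botN _
  set e : β := (b ⊔ c) ⊔ pr sone with he
  have f1 : impN e (b ⊔ c) = sone := by
    have h' := sup_cong d1a (botN _) (b ⊔ c)
    rwa [sup_negone] at h'
  have f2 : impN (b ⊔ c) e = sone := impN_of_le le_sup_left
  have f3 : impN (∼e) (∼sone) = sone := by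
    have h3 : ∼e ≤ ∼(pr (sone : β)) := by
      rw [he, neg_sup]
      exact inf_le_right
    exact impN_trans (impN_of_le h3) d2a
  have f4 : impN (∼sone) (∼e) = sone := botN _
  -- the witness
  refine ⟨((b ⊔ ∼e) ⊓ e) ⊓ snimp c (∼e), ?_, ?_⟩
  · -- nrel a b
    have A1 : impN (b ⊔ ∼e) b = sone := by
      have h' := sup_cong f3 f4 b
      rwa [sup_negone] at h'
    have A1' : impN b (b ⊔ ∼e) = sone := impN_of_le le_sup_left
    have A2 : impN ((b ⊔ ∼e) ⊓ e) (b ⊓ e) = sone := impN_inf_cong A1 e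
    have ia_b : impN (((b ⊔ ∼e) ⊓ e) ⊓ snimp c (∼e)) b = sone :=
      impN_trans (impN_of_le inf_le_left) (impN_trans A2 (impN_of_le inf_le_left))
    have ib_1 : impN b ((b ⊔ ∼e) ⊓ e) = sone :=
      impN_inf_intro A1'
        (impN_trans (impN_of_le (le_sup_left : b ≤ b ⊔ c)) f2)
    have P5 : impN b (snimp c (b ⊓ c)) = sone := by
      have A := sn7' b c (b ⊓ c)
      rw [impN_refl] at A
      have e' : impN c (b ⊓ c) = snimp c (b ⊓ c) := by
        rw [impN_eq]
        congr 1
        ac_rfl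
      rw [e'] at A
      exact A
    have F1' : impN (snimp c (b ⊓ c)) (snimp c (∼e)) = sone :=
      mp9 (impN_trans jbc1 f4) (impN_trans f3 jbc2) c
    have ib_2 : impN b (snimp c (∼e)) = sone := impN_trans P5 F1'
    have ib_a : impN b (((b ⊔ ∼e) ⊓ e) ⊓ snimp c (∼e)) = sone :=
      impN_inf_intro ib_1 ib_2
    exact ⟨nrel_of ia_b ib_a, nrel_of ib_a ia_b⟩
  · -- nrel (∼a) c
    have na_eq : ∼(((b ⊔ ∼e) ⊓ e) ⊓ snimp c (∼e)) =
        ((∼b ⊓ e) ⊔ ∼e) ⊔ ∼(snimp c (∼e)) := by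
      rw [neg_inf, neg_inf, neg_sup, sn3]
    have gb1 : impN (∼(snimp c (∼e))) (c ⊓ e) = sone := by
      have A := sn10 c (∼e)
      rwa [sn3] at A
    have gb2 : impN (c ⊓ e) (∼(snimp c (∼e))) = sone := by
      have A := sn11 c (∼e)
      rwa [sn3] at A
    have partB1 : impN ((∼b ⊓ e) ⊔ ∼e) (∼b ⊓ e) = sone := by
      have h' := sup_cong f3 f4 (∼b ⊓ e)
      rwa [sup_negone] at h'
    have partB1' : impN (∼b ⊓ e) ((∼b ⊓ e) ⊔ ∼e) = sone := impN_of_le le_sup_left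
    have k1 : impN (((∼b ⊓ e) ⊔ ∼e) ⊔ ∼(snimp c (∼e)))
        ((∼b ⊓ e) ⊔ ∼(snimp c (∼e))) = sone :=
      sup_cong_left partB1 partB1' _
    have k2 : impN ((∼b ⊓ e) ⊔ ∼(snimp c (∼e))) ((∼b ⊓ e) ⊔ (c ⊓ e)) = sone :=
      sup_cong gb1 gb2 _
    have sub1 : impN (∼b ⊓ e) (∼b ⊓ (b ⊔ c)) = sone := by
      have h' := impN_inf_cong f1 (∼b)
      have ee : impN (e ⊓ ∼b) ((b ⊔ c) ⊓ ∼b) = impN (∼b ⊓ e) (∼b ⊓ (b ⊔ c)) := by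
        congr 1 <;> ac_rfl
      rw [ee] at h'
      exact h'
    have sub1' : impN (∼b ⊓ (b ⊔ c)) (∼b ⊓ e) = sone := by
      have h' := impN_inf_cong f2 (∼b)
      have ee : impN ((b ⊔ c) ⊓ ∼b) (e ⊓ ∼b) = impN (∼b ⊓ (b ⊔ c)) (∼b ⊓ e) := by
        congr 1 <;> ac_rfl
      rw [ee] at h'
      exact h'
    have k3 : impN ((∼b ⊓ e) ⊔ (c ⊓ e)) ((∼b ⊓ (b ⊔ c)) ⊔ (c ⊓ e)) = sone :=
      sup_cong_left sub1 sub1' _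
    have hc2 : impN c (c ⊓ e) = sone :=
      impN_inf_intro (impN_refl c)
        (impN_trans (impN_of_le (le_sup_right : c ≤ b ⊔ c)) f2)
    have k4 : impN ((∼b ⊓ (b ⊔ c)) ⊔ (c ⊓ e)) ((∼b ⊓ (b ⊔ c)) ⊔ c) = sone :=
      sup_cong (impN_of_le inf_le_left) hc2 _
    have k5 : impN ((∼b ⊓ (b ⊔ c)) ⊔ c) c = sone := by
      have heq : (∼b ⊓ (b ⊔ c)) ⊔ c = (∼b ⊓ b) ⊔ c := by
        rw [inf_sup_left, sup_assoc, sup_eq_right.mpr (inf_le_right : ∼b ⊓ c ≤ c)]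
      rw [heq]
      have hj : impN (∼b ⊓ b) (∼sone) = sone := by
        have h' := junk_bot b
        have ee : impN (b ⊓ ∼b) (∼sone) = impN (∼b ⊓ b) (∼sone) := by
          congr 1
          ac_rfl
        rw [ee] at h'
        exact h'
      have h'' := sup_cong_left hj (botN _) c
      rwa [negone_sup] at h''
    have ca : impN (∼(((b ⊔ ∼e) ⊓ e) ⊓ snimp c (∼e))) c = sone := by
      rw [na_eq]
      exact impN_trans k1 (impN_trans k2 (impN_trans k3 (impN_trans k4 k5)))
    have cc : impN c (∼(((b ⊔ ∼e) ⊓ e) ⊓ snimp c (∼e))) = sone := by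
      rw [na_eq]
      exact impN_trans (impN_trans hc2 gb2) (impN_of_le le_sup_right)
    exact ⟨nrel_of ca cc, nrel_of cc ca⟩

end DSN

end SNTheory

/-- For a dually hemimorphic semi-Nelson algebra `A`, the i-filter
`E = {[a] ⊔ [∼a] : a ∈ A}` is the whole quotient algebra `dsH(A)`, and
`h(a) = ([a],[∼a])` is an isomorphism of `A` onto `V_k(dsH(A))`.
Expressed on representatives: every class `[x]` is of the form `[a] ⊔ [∼a]`,
and `h` is injective and onto the twist set
`{([b],[c]) : [b] ⊓ [c] = ⊥}` (where `⊥ = [∼1]`). -/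
theorem dual_hemi_iso_twist {α : Type*} [DualHemiSemiNelsonAlgebra α] :
    -- E is the whole quotient algebra:
    (∀ x : α, ∃ a : α, nrel x (ssup a (sneg a))) ∧
    -- h is injective:
    (∀ a b : α, nrel a b → nrel (sneg a) (sneg b) → a = b) ∧
    -- h is onto V_k(dsH(A)):
    (∀ b c : α, nrel (sinf b c) (sneg sone) →
      ∃ a : α, nrel a b ∧ nrel (sneg a) c) := by
  exact ⟨fun x => SNTheory.goal1 x, fun a b h1 h2 => SNTheory.goal2 h1 h2,
    fun b c h => SNTheory.goal3 h⟩
end
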